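/- arXiv:math/0301044 — 7 statements merged into one kernel-verified Lean document; each statement's English description precedes it below -/
import Mathlib

section
/- Let (X, Σ, μ) be a σ-finite measure space, 1 ≤ p < ∞, and h ∈ L^p(μ). Let (f_n) be a sequence in L^∞(μ) with sup_n ‖f_n‖_∞ < ∞ and ‖f_n·h‖_p → 0. Then for every q with 1 ≤ q < ∞ and every g ∈ L^q(μ) which vanishes almost everywhere on the set {x : h(x) = 0}, one has ‖f_n·g‖_q → 0. -/
open MeasureTheory Filter Topology ENNReal

/-- If `(f_n) ⊂ L^∞(μ)` is uniformly bounded and `‖f_n·h‖_p → 0` for some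
`h ∈ L^p(μ)`, then for every `q ∈ [1,∞)` and every `g ∈ L^q(μ)` vanishing a.e.
on `{h = 0}`, one has `‖f_n·g‖_q → 0`. -/
theorem stmt2 {X : Type*} [MeasurableSpace X] (μ : Measure X) [SigmaFinite μ]
    (p : ℝ≥0∞) (hp : 1 ≤ p) (hp' : p ≠ ∞)
    (h : X → ℂ) (hh : MemLp h p μ)
    (f : ℕ → X → ℂ) (hf : ∀ n, MemLp (f n) ∞ μ)
    (hbdd : (⨆ n, eLpNorm (f n) ∞ μ) < ∞)
    (hconv : Tendsto (fun n => eLpNorm (fun x => f n x * h x) p μ) atTop (𝓝 0)) :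
    ∀ q : ℝ≥0∞, 1 ≤ q → q ≠ ∞ → ∀ g : X → ℂ, MemLp g q μ →
      (∀ᵐ x ∂μ, h x = 0 → g x = 0) →
      Tendsto (fun n => eLpNorm (fun x => f n x * g x) q μ) atTop (𝓝 0) := by
  intro q hq hq' g hg hgz
  have hq0 : q ≠ 0 := (lt_of_lt_of_le zero_lt_one hq).ne'
  have hqr : 0 < q.toReal := ENNReal.toReal_pos hq0 hq'
  set C := ⨆ n, eLpNorm (f n) ∞ μ with hC
  have hfae : ∀ n, ∀ᵐ x ∂μ, (‖f n x‖₊ : ℝ≥0∞) ≤ C := by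
    intro n
    filter_upwards [ae_le_eLpNormEssSup (f := f n) (μ := μ)] with x hx
    refine hx.trans ?_
    rw [hC, ← eLpNorm_exponent_top (f := f n) (μ := μ)]
    exact le_iSup (fun n => eLpNorm (f n) ∞ μ) n
  have hmeas : ∀ n, AEStronglyMeasurable (fun x => f n x * h x) μ := fun n =>
    (hf n).aestronglyMeasurable.mul hh.aestronglyMeasurable
  have htm : TendstoInMeasure μ (fun n x => f n x * h x) atTop (fun _ => 0) := by
    refine tendstoInMeasure_of_tendsto_eLpNorm (p := p)
      (lt_of_lt_of_le zero_lt_one hp).ne' hmeas aestronglyMeasurable_const ?_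
    have heq : ∀ n : ℕ, ((fun x => f n x * h x) - fun _ => 0) = fun x => f n x * h x :=
      fun n => by funext x; simp
    simpa [heq] using hconv
  refine tendsto_of_subseq_tendsto fun ns hns => ?_
  have htm' : TendstoInMeasure μ (fun k x => f (ns k) x * h x) atTop (fun _ => 0) :=
    fun ε hε => (htm ε hε).comp hns
  obtain ⟨ms, -, hae⟩ := htm'.exists_seq_tendsto_ae
  refine ⟨ms, ?_⟩
  set F : ℕ → X → ℝ≥0∞ := fun k x => (‖f (ns (ms k)) x * g x‖₊ : ℝ≥0∞) ^ q.toReal with hF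
  have hFmeas : ∀ k, AEMeasurable (F k) μ := fun k =>
    ENNReal.continuous_rpow_const.measurable.comp_aemeasurable
      ((hf (ns (ms k))).aestronglyMeasurable.mul hg.aestronglyMeasurable).enorm
  have h_bound : ∀ k, F k ≤ᵐ[μ] fun x => (C * ‖g x‖₊) ^ q.toReal := by
    intro k
    filter_upwards [hfae (ns (ms k))] with x hx
    refine ENNReal.rpow_le_rpow ?_ hqr.le
    rw [nnnorm_mul, ENNReal.coe_mul]
    exact mul_le_mul_left hx _
  have h_fin : ∫⁻ x, (C * ‖g x‖₊) ^ q.toReal ∂μ ≠ ∞ := by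
    have : ∫⁻ x, (C * ‖g x‖₊) ^ q.toReal ∂μ
        = C ^ q.toReal * ∫⁻ x, (‖g x‖₊ : ℝ≥0∞) ^ q.toReal ∂μ := by
      have hgm : AEMeasurable (fun x => (‖g x‖₊ : ℝ≥0∞) ^ q.toReal) μ :=
        ENNReal.continuous_rpow_const.measurable.comp_aemeasurable
          hg.aestronglyMeasurable.enorm
      rw [← lintegral_const_mul'' _ hgm]
      exact lintegral_congr fun x => ENNReal.mul_rpow_of_nonneg _ _ hqr.le
    rw [this]
    exact ENNReal.mul_ne_top (ENNReal.rpow_ne_top_of_nonneg hqr.le hbdd.ne)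
      (lintegral_rpow_enorm_lt_top_of_eLpNorm_lt_top hq0 hq' hg.2).ne
  have h_lim : ∀ᵐ x ∂μ, Tendsto (fun k => F k x) atTop (𝓝 0) := by
    filter_upwards [hae, hgz] with x hx hx0
    have hprod : Tendsto (fun k => f (ns (ms k)) x * g x) atTop (𝓝 0) := by
      by_cases hhx : h x = 0
      · simpa [hx0 hhx] using (tendsto_const_nhds :
          Tendsto (fun _ : ℕ => (0 : ℂ)) atTop (𝓝 0))
      · have h1 := hx.mul_const (g x / h x)
        rw [zero_mul] at h1
        refine h1.congr fun k => ?_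
        field_simp
    have h2 : Tendsto (fun k => (‖f (ns (ms k)) x * g x‖₊ : ℝ≥0∞)) atTop (𝓝 0) := by
      simpa using ENNReal.tendsto_coe.2 hprod.nnnorm
    have h3 := ((ENNReal.continuous_rpow_const (y := q.toReal)).tendsto 0).comp h2
    rw [ENNReal.zero_rpow_of_pos hqr] at h3
    exact h3
  have hlint := tendsto_lintegral_of_dominated_convergence' _ hFmeas h_bound h_fin h_lim
  rw [lintegral_zero] at hlint
  have hfinal : Tendsto (fun k => (∫⁻ x, F k x ∂μ) ^ (1 / q.toReal)) atTop (𝓝 0) := by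
    have h0 : (0 : ℝ≥0∞) ^ (1 / q.toReal) = 0 :=
      ENNReal.zero_rpow_of_pos (by positivity)
    rw [← h0]
    exact ((ENNReal.continuous_rpow_const (y := 1 / q.toReal)).tendsto 0).comp hlint
  exact hfinal.congr fun k => (eLpNorm_eq_lintegral_rpow_enorm_toReal hq0 hq').symm
end

section
/- Let (X, Σ, μ) be a σ-finite measure space and 1 ≤ q ≤ p ≤ ∞, with r ∈ [1,∞] defined by 1/r = 1/q − 1/p. Let T : L^p(μ) → L^q(μ) be a bounded linear map satisfying T(f·g) = f·T(g) for all f ∈ L^∞(μ) and g ∈ L^p(μ). Then there exists h ∈ L^r(μ) with ‖h‖_r ≤ ‖T‖ such that T(g) = h·g for all g ∈ L^p(μ). -/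
open MeasureTheory Filter Topology ENNReal

lemma eLpNorm_coe_Lp {X : Type*} [MeasurableSpace X] {μ : Measure X} {p : ℝ≥0∞}
    (u : Lp ℂ p μ) : eLpNorm (u : X → ℂ) p μ = ENNReal.ofReal ‖u‖ := by
  rw [Lp.norm_def, ENNReal.ofReal_toReal (Lp.eLpNorm_ne_top u)]

lemma eLpNorm_eq_lintegral_rpow_nnnorm {X : Type*} [MeasurableSpace X] {μ : Measure X} {p : ℝ≥0∞}
    (hp0 : p ≠ 0) (hp_top : p ≠ ∞) (f : X → ℂ) :
    eLpNorm f p μ = (∫⁻ x, (‖f x‖₊ : ℝ≥0∞) ^ p.toReal ∂μ) ^ (1 / p.toReal) :=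
  eLpNorm_eq_lintegral_rpow_enorm_toReal hp0 hp_top

lemma ofReal_norm_eq_coe_nnnorm (a : ℂ) : ENNReal.ofReal ‖a‖ = (‖a‖₊ : ℝ≥0∞) :=
  ofReal_norm a

lemma conv_holder {X : Type*} [MeasurableSpace X] (μ : Measure X) [SigmaFinite μ]
    {p q r : ℝ≥0∞} (hp1 : 1 ≤ p) (hq1 : 1 ≤ q) (hp_top : p ≠ ∞) (hqp : q ≤ p)
    (hqrp : 1/q = 1/r + 1/p)
    {h : X → ℂ} (hmeas : AEStronglyMeasurable h μ) {C : ℝ≥0∞} (hC : C ≠ ∞)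
    (bnd : ∀ v : X → ℂ, MemLp v p μ → MemLp v ∞ μ →
      eLpNorm (fun x => h x * v x) q μ ≤ C * eLpNorm v p μ) :
    eLpNorm h r μ ≤ C := by
  have hp0 : p ≠ 0 := by positivity
  have hq0 : q ≠ 0 := by positivity
  have hq_top : q ≠ ∞ := fun hq => hp_top (top_le_iff.mp (hq ▸ hqp))
  have hpt : 0 < p.toReal := ENNReal.toReal_pos hp0 hp_top
  have hqt : 0 < q.toReal := ENNReal.toReal_pos hq0 hq_top
  set h' := hmeas.mk h with hh'def
  have hh' : h =ᵐ[μ] h' := hmeas.ae_eq_mk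
  have hm' : Measurable h' := hmeas.stronglyMeasurable_mk.measurable
  by_cases hrtop : r = ∞
  · -- q = p case
    subst hrtop
    have hqp' : q = p := by
      have : 1/q = 1/p := by simpa using hqrp
      rwa [one_div, one_div, inv_inj] at this
    subst hqp'
    by_contra hlt
    push_neg at hlt
    obtain ⟨c, hc1, hc2⟩ := exists_between hlt
    have hc_lt_ess : c < eLpNormEssSup h' μ := by
      rwa [← eLpNormEssSup_congr_ae hh', ← eLpNorm_exponent_top]
    set A : Set X := {x | c < (‖h' x‖₊ : ℝ≥0∞)} with hA_def
    have hAmeas : MeasurableSet A :=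
      measurableSet_lt measurable_const (hm'.enorm)
    have hA0 : μ A ≠ 0 := by
      intro hA
      have hae : ∀ᵐ x ∂μ, (‖h' x‖₊ : ℝ≥0∞) ≤ c := by
        rw [ae_iff]
        simpa [A, not_le] using hA
      have : eLpNormEssSup h' μ ≤ c := essSup_le_of_ae_le c hae
      exact absurd (this.trans_lt hc_lt_ess) (lt_irrefl _)
    obtain ⟨n, hn⟩ : ∃ n, μ (A ∩ spanningSets μ n) ≠ 0 := by
      by_contra hall
      push_neg at hall
      apply hA0
      have : A = ⋃ n, A ∩ spanningSets μ n := by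
        rw [← Set.inter_iUnion, iUnion_spanningSets, Set.inter_univ]
      rw [this]
      exact measure_iUnion_null hall
    set B := A ∩ spanningSets μ n with hB_def
    have hBmeas : MeasurableSet B := hAmeas.inter (measurableSet_spanningSets μ n)
    have hμB_top : μ B ≠ ∞ :=
      ((measure_mono Set.inter_subset_right).trans_lt (measure_spanningSets_lt_top μ n)).ne
    set v : X → ℂ := B.indicator (fun _ => (1:ℂ)) with hv_def
    have hvp : MemLp v q μ := memLp_indicator_const q hBmeas 1 (Or.inr hμB_top)
    have hvtop : MemLp v ∞ μ := memLp_indicator_const ∞ hBmeas 1 (Or.inr hμB_top)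
    have key := bnd v hvp hvtop
    have hRHS : eLpNorm v q μ = μ B ^ (1 / q.toReal) := by
      rw [eLpNorm_indicator_const hBmeas hq0 hq_top]
      simp
    have hLHS : c * μ B ^ (1 / q.toReal) ≤ eLpNorm (fun x => h x * v x) q μ := by
      have hcongr : eLpNorm (fun x => h x * v x) q μ = eLpNorm (fun x => h' x * v x) q μ := by
        apply eLpNorm_congr_ae
        filter_upwards [hh'] with x hx
        simp only [hx]
      rw [hcongr, eLpNorm_eq_lintegral_rpow_nnnorm hp0 hp_top]
      have hint : c ^ q.toReal * μ B ≤ ∫⁻ x, (‖h' x * v x‖₊ : ℝ≥0∞) ^ q.toReal ∂μ := by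
        calc c ^ q.toReal * μ B = ∫⁻ x, B.indicator (fun _ => c ^ q.toReal) x ∂μ := by
              rw [lintegral_indicator hBmeas, setLIntegral_const]
          _ ≤ _ := by
              apply lintegral_mono
              intro x
              by_cases hx : x ∈ B
              · simp only [Set.indicator_of_mem hx]
                have : c ≤ (‖h' x * v x‖₊ : ℝ≥0∞) := by
                  rw [hv_def, Set.indicator_of_mem hx, mul_one]
                  exact (hx.1 : c < _).le
                exact ENNReal.rpow_le_rpow this hqt.le
              · simp [Set.indicator_of_notMem hx]
      calc c * μ B ^ (1 / q.toReal) = (c ^ q.toReal * μ B) ^ (1 / q.toReal) := by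
            rw [ENNReal.mul_rpow_of_nonneg _ _ (by positivity), ← ENNReal.rpow_mul,
              mul_one_div, div_self hqt.ne', ENNReal.rpow_one]
        _ ≤ _ := ENNReal.rpow_le_rpow hint (by positivity)
    have hμB_pow_ne0 : μ B ^ (1 / q.toReal) ≠ 0 := by
      simp only [ne_eq, ENNReal.rpow_eq_zero_iff, not_or]
      constructor
      · rintro ⟨h1, -⟩; exact hn h1
      · rintro ⟨h1, -⟩; exact hμB_top h1
    have hμB_pow_ne_top : μ B ^ (1 / q.toReal) ≠ ∞ :=
      ENNReal.rpow_ne_top_of_nonneg (by positivity) hμB_top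
    have : c * μ B ^ (1 / q.toReal) ≤ C * μ B ^ (1 / q.toReal) := by
      calc c * μ B ^ (1 / q.toReal) ≤ eLpNorm (fun x => h x * v x) q μ := hLHS
        _ ≤ C * eLpNorm v q μ := key
        _ = C * μ B ^ (1 / q.toReal) := by rw [hRHS]
    have hcC : c ≤ C := (ENNReal.mul_le_mul_iff_left hμB_pow_ne0 hμB_pow_ne_top).mp this
    exact absurd (hc1.trans_le hcC) (lt_irrefl _)
  · -- r finite case
    have hr0 : r ≠ 0 := by
      intro hrz
      rw [hrz] at hqrp
      simp only [one_div, ENNReal.inv_zero, top_add, ENNReal.inv_eq_top] at hqrp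
      exact hq0 hqrp
    have hrt : 0 < r.toReal := ENNReal.toReal_pos hr0 hrtop
    set pt := p.toReal
    set qt := q.toReal
    set rt := r.toReal
    have hrec : 1/qt = 1/rt + 1/pt := by
      have := congrArg ENNReal.toReal hqrp
      rw [ENNReal.toReal_add (by simp [hr0]) (by simp [hp0]), ENNReal.toReal_div,
        ENNReal.toReal_div, ENNReal.toReal_div] at this
      simpa using this
    set a := rt / pt with ha_def
    have ha0 : 0 ≤ a := by positivity
    have h_ap : a * pt = rt := div_mul_cancel₀ _ hpt.ne'
    have h_aq : (1 + a) * qt = rt := by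
      have h1 : qt * rt * pt ≠ 0 := by positivity
      field_simp [ha_def]
      field_simp at hrec
      nlinarith [hrec]
    set ψ : ℕ → X → ℝ≥0∞ := fun n =>
      (spanningSets μ n).indicator (fun x => min (‖h' x‖₊ : ℝ≥0∞) n) with hψ_def
    have hψ_meas : ∀ n, Measurable (ψ n) := fun n =>
      (hm'.enorm.min measurable_const).indicator (measurableSet_spanningSets μ n)
    have hψ_le_norm : ∀ n x, ψ n x ≤ (‖h' x‖₊ : ℝ≥0∞) := by
      intro n x
      refine (Set.indicator_le' (fun x _ => min_le_left _ _) (fun x _ => zero_le) x)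
    have hψ_le_n : ∀ n x, ψ n x ≤ (n : ℝ≥0∞) :=
      fun n x => Set.indicator_le' (fun x _ => min_le_right _ _) (fun x _ => zero_le) x
    have hψ_mono : ∀ x, Monotone fun n => ψ n x := by
      intro x n m hnm
      simp only [hψ_def]
      by_cases hx : x ∈ spanningSets μ n
      · rw [Set.indicator_of_mem hx, Set.indicator_of_mem (monotone_spanningSets μ hnm hx)]
        exact min_le_min le_rfl (Nat.cast_le.mpr hnm)
      · simp [Set.indicator_of_notMem hx]
    set I : ℕ → ℝ≥0∞ := fun n => ∫⁻ x, ψ n x ^ rt ∂μ with hI_def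
    have hI_top : ∀ n, I n ≠ ∞ := by
      intro n
      have : I n ≤ (n : ℝ≥0∞) ^ rt * μ (spanningSets μ n) := by
        rw [hI_def]
        calc ∫⁻ x, ψ n x ^ rt ∂μ
            ≤ ∫⁻ x, (spanningSets μ n).indicator (fun _ => (n : ℝ≥0∞) ^ rt) x ∂μ := by
              apply lintegral_mono
              intro x
              by_cases hx : x ∈ spanningSets μ n
              · rw [Set.indicator_of_mem hx]
                exact ENNReal.rpow_le_rpow (hψ_le_n n x) hrt.le
              · simp [hψ_def, Set.indicator_of_notMem hx, ENNReal.zero_rpow_of_pos hrt]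
          _ = (n : ℝ≥0∞) ^ rt * μ (spanningSets μ n) := by
              rw [lintegral_indicator (measurableSet_spanningSets μ n), setLIntegral_const]
      exact ne_top_of_le_ne_top
        (ENNReal.mul_ne_top (ENNReal.rpow_ne_top_of_nonneg hrt.le (by simp))
          (measure_spanningSets_lt_top μ n).ne) this
    have step : ∀ n, I n ≤ C ^ rt := by
      intro n
      by_cases hI0 : I n = 0
      · rw [hI0]; exact zero_le
      set v : X → ℂ := fun x => ((ψ n x ^ a).toReal : ℂ) with hv_def
      have hψa_top : ∀ x, ψ n x ^ a ≠ ∞ :=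
        fun x => ENNReal.rpow_ne_top_of_nonneg ha0
          (ne_top_of_le_ne_top (by simp) (hψ_le_n n x))
      have hvnn : ∀ x, (‖v x‖₊ : ℝ≥0∞) = ψ n x ^ a := by
        intro x
        rw [← ofReal_norm_eq_coe_nnnorm, hv_def]
        simp only [Complex.norm_real, Real.norm_eq_abs,
          abs_of_nonneg ENNReal.toReal_nonneg]
        exact ENNReal.ofReal_toReal (hψa_top x)
      have hv_meas : AEStronglyMeasurable v μ := by
        apply Measurable.aestronglyMeasurable
        exact Complex.measurable_ofReal.comp
          (ENNReal.measurable_toReal.comp ((hψ_meas n).pow_const a))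
      have hv_int : ∀ s : ℝ, (0 < s) → ∫⁻ x, (‖v x‖₊ : ℝ≥0∞) ^ s ∂μ = ∫⁻ x, ψ n x ^ (a * s) ∂μ := by
        intro s hs
        apply lintegral_congr
        intro x
        rw [hvnn x, ← ENNReal.rpow_mul]
      have hvp : MemLp v p μ := by
        refine ⟨hv_meas, ?_⟩
        rw [eLpNorm_eq_lintegral_rpow_nnnorm hp0 hp_top, hv_int pt hpt, h_ap]
        exact ENNReal.rpow_lt_top_of_nonneg (by positivity) (hI_top n)
      have hvtop : MemLp v ∞ μ := by
        apply memLp_top_of_bound hv_meas (((n : ℝ≥0∞) ^ a).toReal)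
        apply Filter.Eventually.of_forall
        intro x
        rw [hv_def]
        simp only [Complex.norm_real, Real.norm_eq_abs, abs_of_nonneg ENNReal.toReal_nonneg]
        exact ENNReal.toReal_mono (ENNReal.rpow_ne_top_of_nonneg ha0 (by simp))
          (ENNReal.rpow_le_rpow (hψ_le_n n x) ha0)
      have key := bnd v hvp hvtop
      have hRHS : eLpNorm v p μ = I n ^ (1/pt) := by
        rw [eLpNorm_eq_lintegral_rpow_nnnorm hp0 hp_top, hv_int pt hpt, h_ap]
      have hLHS : I n ^ (1/qt) ≤ eLpNorm (fun x => h x * v x) q μ := by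
        rw [eLpNorm_eq_lintegral_rpow_nnnorm hq0 hq_top]
        have hint : I n ≤ ∫⁻ x, (‖h x * v x‖₊ : ℝ≥0∞) ^ qt ∂μ := by
          rw [hI_def]
          apply lintegral_mono_ae
          filter_upwards [hh'] with x hx
          have : ψ n x ^ rt ≤ ((‖h x‖₊ : ℝ≥0∞) * (‖v x‖₊ : ℝ≥0∞)) ^ qt := by
            rw [hx, hvnn x]
            calc ψ n x ^ rt = (ψ n x ^ (1 + a)) ^ qt := by
                  rw [← ENNReal.rpow_mul, h_aq]
              _ ≤ ((‖h' x‖₊ : ℝ≥0∞) * ψ n x ^ a) ^ qt := by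
                  apply ENNReal.rpow_le_rpow _ hqt.le
                  rw [ENNReal.rpow_add_of_nonneg 1 a zero_le_one ha0, ENNReal.rpow_one]
                  exact mul_le_mul_left (hψ_le_norm n x) _
          rw [nnnorm_mul, ENNReal.coe_mul]
          exact this
        exact ENNReal.rpow_le_rpow hint (by positivity)
      have hmain : I n ^ (1/qt) ≤ C * I n ^ (1/pt) := by
        rw [← hRHS]; exact hLHS.trans key
      have hIpt_ne0 : I n ^ (1/pt) ≠ 0 := by
        simp only [ne_eq, ENNReal.rpow_eq_zero_iff, not_or]
        exact ⟨fun ⟨h1, _⟩ => hI0 h1, fun ⟨h1, _⟩ => hI_top n h1⟩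
      have hIpt_ne_top : I n ^ (1/pt) ≠ ∞ :=
        ENNReal.rpow_ne_top_of_nonneg (by positivity) (hI_top n)
      have hsplit : I n ^ (1/qt) = I n ^ (1/rt) * I n ^ (1/pt) := by
        rw [← ENNReal.rpow_add_of_nonneg _ _ (by positivity) (by positivity), ← hrec]
      rw [hsplit] at hmain
      have : I n ^ (1/rt) ≤ C :=
        (ENNReal.mul_le_mul_iff_left hIpt_ne0 hIpt_ne_top).mp hmain
      calc I n = (I n ^ (1/rt)) ^ rt := by
            rw [← ENNReal.rpow_mul, one_div, inv_mul_cancel₀ hrt.ne', ENNReal.rpow_one]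
        _ ≤ C ^ rt := ENNReal.rpow_le_rpow this hrt.le
    -- limit
    have htendsto : Tendsto (fun n => I n) atTop (𝓝 (∫⁻ x, (‖h' x‖₊ : ℝ≥0∞) ^ rt ∂μ)) := by
      apply lintegral_tendsto_of_tendsto_of_monotone
      · exact fun n => ((hψ_meas n).pow_const rt).aemeasurable
      · exact Filter.Eventually.of_forall fun x n m hnm =>
          ENNReal.rpow_le_rpow (hψ_mono x hnm) hrt.le
      · apply Filter.Eventually.of_forall
        intro x
        have hx : ∃ N, x ∈ spanningSets μ N := by
          have := iUnion_spanningSets μ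
          rw [Set.iUnion_eq_univ_iff] at this
          exact this x
        obtain ⟨N, hN⟩ := hx
        have h1 : Tendsto (fun n : ℕ => ψ n x) atTop (𝓝 (‖h' x‖₊ : ℝ≥0∞)) := by
          have h2 : Tendsto (fun n : ℕ => min (‖h' x‖₊ : ℝ≥0∞) n) atTop
              (𝓝 (min (‖h' x‖₊ : ℝ≥0∞) ∞)) :=
            Tendsto.min tendsto_const_nhds ENNReal.tendsto_nat_nhds_top
          rw [min_eq_left le_top] at h2
          apply h2.congr'
          filter_upwards [Filter.eventually_ge_atTop N] with n hn
          rw [hψ_def]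
          simp only
          rw [Set.indicator_of_mem (monotone_spanningSets μ hn hN)]
        exact (ENNReal.continuous_rpow_const.tendsto _).comp h1
    have hlim : ∫⁻ x, (‖h' x‖₊ : ℝ≥0∞) ^ rt ∂μ ≤ C ^ rt :=
      le_of_tendsto htendsto (Filter.Eventually.of_forall step)
    rw [eLpNorm_congr_ae hh', eLpNorm_eq_lintegral_rpow_nnnorm hr0 hrtop]
    calc (∫⁻ x, (‖h' x‖₊ : ℝ≥0∞) ^ rt ∂μ) ^ (1/rt) ≤ (C ^ rt) ^ (1/rt) :=
          ENNReal.rpow_le_rpow hlim (by positivity)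
      _ = C := by rw [← ENNReal.rpow_mul, mul_one_div, div_self hrt.ne', ENNReal.rpow_one]

/-- Every bounded module map `T : L^p(μ) → L^q(μ)` (i.e. commuting with the
pointwise action of `L^∞(μ)`), where `1 ≤ q ≤ p ≤ ∞` and `1/r = 1/q - 1/p`, is
pointwise multiplication by some `h ∈ L^r(μ)` with `‖h‖_r ≤ ‖T‖`. -/
theorem stmt4 {X : Type*} [MeasurableSpace X] (μ : Measure X) [SigmaFinite μ]
    (p q r : ℝ≥0∞) [Fact (1 ≤ p)] [Fact (1 ≤ q)] (hqp : q ≤ p)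
    (hr : 1 / r = 1 / q - 1 / p)
    (T : Lp ℂ p μ →L[ℂ] Lp ℂ q μ)
    (hmod : ∀ f : X → ℂ, MemLp f ∞ μ → ∀ g u : Lp ℂ p μ,
      (u : X → ℂ) =ᵐ[μ] (fun x => f x * (g : X → ℂ) x) →
      (T u : X → ℂ) =ᵐ[μ] fun x => f x * (T g : X → ℂ) x) :
    ∃ h : X → ℂ, MemLp h r μ ∧ eLpNorm h r μ ≤ ENNReal.ofReal ‖T‖ ∧
      ∀ g : Lp ℂ p μ, (T g : X → ℂ) =ᵐ[μ] fun x => h x * (g : X → ℂ) x := by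
  have hp1 : 1 ≤ p := Fact.out
  have hq1 : 1 ≤ q := Fact.out
  have hq0 : q ≠ 0 := by positivity
  have hp0 : p ≠ 0 := by positivity
  set C := ENNReal.ofReal ‖T‖ with hC_def
  by_cases hp_top : p = ∞
  · -- p = ∞ : T is multiplication by T 1
    subst hp_top
    have hrq : r = q := by
      rw [one_div, one_div, one_div, ENNReal.inv_top, tsub_zero, inv_inj] at hr
      exact hr
    subst hrq
    set one : Lp ℂ ∞ μ := (memLp_top_const (1:ℂ)).toLp _ with hone_def
    have hone : (one : X → ℂ) =ᵐ[μ] fun _ => (1:ℂ) := MemLp.coeFn_toLp _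
    have hone_norm : ‖one‖ ≤ 1 := by
      rw [Lp.norm_def]
      have h1 : eLpNorm (one : X → ℂ) ∞ μ ≤ ENNReal.ofReal 1 := by
        rw [eLpNorm_congr_ae hone, eLpNorm_exponent_top]
        exact eLpNormEssSup_le_of_ae_bound (C := 1)
          (Filter.Eventually.of_forall fun x => by simp)
      calc (eLpNorm (one : X → ℂ) ∞ μ).toReal
          ≤ (ENNReal.ofReal 1).toReal := ENNReal.toReal_mono ENNReal.ofReal_ne_top h1
        _ = 1 := by simp
    refine ⟨(T one : X → ℂ), Lp.memLp _, ?_, ?_⟩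
    · rw [eLpNorm_coe_Lp]
      apply ENNReal.ofReal_le_ofReal
      calc ‖T one‖ ≤ ‖T‖ * ‖one‖ := T.le_opNorm one
        _ ≤ ‖T‖ * 1 := mul_le_mul_of_nonneg_left hone_norm (norm_nonneg T)
        _ = ‖T‖ := mul_one _
    · intro g
      have := hmod (g : X → ℂ) (Lp.memLp g) one g (by
        filter_upwards [hone] with x hx
        rw [hx, mul_one])
      filter_upwards [this] with x hx
      rw [hx, mul_comm]
  · -- p < ∞
    have hq_top : q ≠ ∞ := fun hq => hp_top (top_le_iff.mp (hq ▸ hqp))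
    have hqrp : 1/q = 1/r + 1/p := by
      rw [hr, tsub_add_cancel_of_le]
      rw [one_div, one_div]
      exact ENNReal.inv_le_inv.mpr hqp
    have hfull : ∀ x, ∃ n, x ∈ spanningSets μ n := by
      intro x
      have := iUnion_spanningSets μ
      rw [Set.iUnion_eq_univ_iff] at this
      exact this x
    set ind : ℕ → X → ℂ := fun n => (spanningSets μ n).indicator (fun _ => (1:ℂ)) with hind_def
    have hind_mem : ∀ n, MemLp (ind n) ∞ μ := fun n =>
      memLp_indicator_const ∞ (measurableSet_spanningSets μ n) 1
        (Or.inr (measure_spanningSets_lt_top μ n).ne)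
    set χ : ℕ → Lp ℂ p μ := fun n =>
      indicatorConstLp p (measurableSet_spanningSets μ n)
        (measure_spanningSets_lt_top μ n).ne (1:ℂ) with hχ_def
    have hχ : ∀ n, (χ n : X → ℂ) =ᵐ[μ] ind n := fun n => indicatorConstLp_coeFn
    set k : ℕ → X → ℂ := fun n => (T (χ n) : X → ℂ) with hk_def
    have compat : ∀ n m, n ≤ m → k n =ᵐ[μ] fun x => ind n x * k m x := by
      intro n m hnm
      apply hmod (ind n) (hind_mem n) (χ m) (χ n)
      filter_upwards [hχ n, hχ m] with x h1 h2
      rw [h1, h2]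
      simp only [hind_def]
      by_cases hx : x ∈ spanningSets μ n
      · rw [Set.indicator_of_mem hx,
          Set.indicator_of_mem (monotone_spanningSets μ hnm hx), mul_one]
      · rw [Set.indicator_of_notMem hx, zero_mul]
    have hcompat_ae : ∀ᵐ x ∂μ, ∀ n m, n ≤ m → k n x = ind n x * k m x := by
      rw [ae_all_iff]
      intro n
      rw [ae_all_iff]
      intro m
      by_cases hnm : n ≤ m
      · filter_upwards [compat n m hnm] with x hx _
        exact hx
      · filter_upwards with x hx
        exact absurd hx hnm
    set h : X → ℂ := fun x => limUnder atTop (fun n => k n x) with hh_def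
    have hlock : ∀ᵐ x ∂μ, ∀ n, x ∈ spanningSets μ n → h x = k n x := by
      filter_upwards [hcompat_ae] with x hx n hxn
      have hev : ∀ m, n ≤ m → k m x = k n x := by
        intro m hm
        rw [hx n m hm]
        simp only [hind_def]
        rw [Set.indicator_of_mem hxn, one_mul]
      have : Tendsto (fun m => k m x) atTop (𝓝 (k n x)) := by
        apply tendsto_const_nhds.congr'
        filter_upwards [eventually_ge_atTop n] with m hm
        exact (hev m hm).symm
      exact this.limUnder_eq
    have htend : ∀ᵐ x ∂μ, Tendsto (fun n => k n x) atTop (𝓝 (h x)) := by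
      filter_upwards [hlock, hcompat_ae] with x h1 h2
      obtain ⟨n, hn⟩ := hfull x
      have hev : ∀ m, n ≤ m → k m x = k n x := by
        intro m hm
        rw [h2 n m hm]
        simp only [hind_def]
        rw [Set.indicator_of_mem hn, one_mul]
      have htend' : Tendsto (fun m => k m x) atTop (𝓝 (k n x)) := by
        apply tendsto_const_nhds.congr'
        filter_upwards [eventually_ge_atTop n] with m hm
        exact (hev m hm).symm
      rwa [← h1 n hn] at htend'
    have hmeas_h : AEStronglyMeasurable h μ :=
      aestronglyMeasurable_of_tendsto_ae atTop
        (fun n => Lp.aestronglyMeasurable (T (χ n))) htend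
    have claimC : ∀ g : Lp ℂ p μ, MemLp (g : X → ℂ) ∞ μ →
        (T g : X → ℂ) =ᵐ[μ] fun x => h x * (g : X → ℂ) x := by
      intro g hgtop
      have memu : ∀ n, MemLp ((spanningSets μ n).indicator (g : X → ℂ)) p μ := fun n =>
        (Lp.memLp g).indicator (measurableSet_spanningSets μ n)
      have eq3 : ∀ n, (fun x => ind n x * (T g : X → ℂ) x) =ᵐ[μ]
          fun x => (g : X → ℂ) x * k n x := by
        intro n
        have eq1 : (T ((memu n).toLp _) : X → ℂ) =ᵐ[μ] fun x => ind n x * (T g : X → ℂ) x := by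
          apply hmod (ind n) (hind_mem n) g _
          filter_upwards [(memu n).coeFn_toLp] with x hx
          rw [hx]
          simp only [hind_def]
          by_cases hxs : x ∈ spanningSets μ n
          · rw [Set.indicator_of_mem hxs, Set.indicator_of_mem hxs, one_mul]
          · rw [Set.indicator_of_notMem hxs, Set.indicator_of_notMem hxs, zero_mul]
        have eq2 : (T ((memu n).toLp _) : X → ℂ) =ᵐ[μ] fun x => (g : X → ℂ) x * k n x := by
          apply hmod (g : X → ℂ) hgtop (χ n) _
          filter_upwards [(memu n).coeFn_toLp, hχ n] with x hx1 hx2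
          rw [hx1, hx2]
          simp only [hind_def]
          by_cases hxs : x ∈ spanningSets μ n
          · rw [Set.indicator_of_mem hxs, Set.indicator_of_mem hxs, mul_one]
          · rw [Set.indicator_of_notMem hxs, Set.indicator_of_notMem hxs, mul_zero]
        exact eq1.symm.trans eq2
      filter_upwards [ae_all_iff.mpr eq3, hlock] with x h3 h1
      obtain ⟨n, hn⟩ := hfull x
      have hthis := h3 n
      simp only [hind_def, Set.indicator_of_mem hn, one_mul] at hthis
      rw [hthis, h1 n hn, mul_comm]
    have bnd : ∀ v : X → ℂ, MemLp v p μ → MemLp v ∞ μ →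
        eLpNorm (fun x => h x * v x) q μ ≤ C * eLpNorm v p μ := by
      intro v hvp hvtop
      set u := hvp.toLp v with hu_def
      have hu : (u : X → ℂ) =ᵐ[μ] v := hvp.coeFn_toLp
      have hutop : MemLp (u : X → ℂ) ∞ μ := hvtop.ae_eq hu.symm
      have hTu := claimC u hutop
      have h1 : eLpNorm (fun x => h x * v x) q μ = eLpNorm (T u : X → ℂ) q μ := by
        apply eLpNorm_congr_ae
        symm
        filter_upwards [hTu, hu] with x hx1 hx2
        rw [hx1, hx2]
      rw [h1, eLpNorm_coe_Lp]
      calc ENNReal.ofReal ‖T u‖ ≤ ENNReal.ofReal (‖T‖ * ‖u‖) :=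
            ENNReal.ofReal_le_ofReal (T.le_opNorm u)
        _ = C * ENNReal.ofReal ‖u‖ := by rw [ENNReal.ofReal_mul (norm_nonneg T)]
        _ = C * eLpNorm v p μ := by rw [← eLpNorm_coe_Lp u, eLpNorm_congr_ae hu]
    have conv : eLpNorm h r μ ≤ C :=
      conv_holder μ hp1 hq1 hp_top hqp hqrp hmeas_h ENNReal.ofReal_ne_top bnd
    have memr : MemLp h r μ := ⟨hmeas_h, conv.trans_lt ENNReal.ofReal_lt_top⟩
    refine ⟨h, memr, conv, ?_⟩
    intro g
    set w : X → ℂ := fun x => (T g : X → ℂ) x - h x * (g : X → ℂ) x with hw_def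
    suffices hw : eLpNorm w q μ = 0 by
      have hw_meas : AEStronglyMeasurable w μ :=
        (Lp.aestronglyMeasurable (T g)).sub (hmeas_h.mul (Lp.aestronglyMeasurable g))
      have := (eLpNorm_eq_zero_iff hw_meas hq0).mp hw
      filter_upwards [this] with x hx
      have hx' : (T g : X → ℂ) x - h x * (g : X → ℂ) x = 0 := hx
      exact sub_eq_zero.mp hx'
    refine le_antisymm ?_ (zero_le)
    apply ENNReal.le_of_forall_pos_le_add
    intro ε hε _
    rw [zero_add]
    set K := C + eLpNorm h r μ + 1 with hK_def
    have hK0 : K ≠ 0 := by simp [hK_def]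
    have hKtop : K ≠ ∞ := by
      apply ENNReal.add_ne_top.mpr
      exact ⟨ENNReal.add_ne_top.mpr ⟨ENNReal.ofReal_ne_top,
        (conv.trans_lt ENNReal.ofReal_lt_top).ne⟩, ENNReal.one_ne_top⟩
    set δ := ((ε : ℝ≥0∞) / K).toReal with hδ_def
    have hεK_ne_top : (ε : ℝ≥0∞) / K ≠ ∞ :=
      (ENNReal.div_lt_top ENNReal.coe_ne_top hK0).ne
    have hδ0 : 0 < δ := ENNReal.toReal_pos
      (by
        simp only [ne_eq, ENNReal.div_eq_zero_iff, not_or]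
        exact ⟨by exact_mod_cast hε.ne', hKtop⟩) hεK_ne_top
    obtain ⟨s, hs⟩ := Metric.denseRange_iff.mp (Lp.simpleFunc.denseRange hp_top) g δ hδ0
    have hstop : MemLp ((s : Lp ℂ p μ) : X → ℂ) ∞ μ := by
      obtain ⟨Cb, hCb⟩ := (Lp.simpleFunc.toSimpleFunc s).exists_forall_norm_le
      apply memLp_top_of_bound (Lp.aestronglyMeasurable _) Cb
      filter_upwards [Lp.simpleFunc.toSimpleFunc_eq_toFun s] with x hx
      rw [← hx]
      exact hCb x
    have hTs := claimC (s : Lp ℂ p μ) hstop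
    have hdist : eLpNorm (fun x => ((s : Lp ℂ p μ) : X → ℂ) x - (g : X → ℂ) x) p μ
        = ENNReal.ofReal ‖(s : Lp ℂ p μ) - g‖ := by
      rw [← eLpNorm_coe_Lp ((s : Lp ℂ p μ) - g)]
      apply eLpNorm_congr_ae
      symm
      filter_upwards [Lp.coeFn_sub (s : Lp ℂ p μ) g] with x hx
      rw [hx]
      rfl
    have hdist_le : ENNReal.ofReal ‖(s : Lp ℂ p μ) - g‖ ≤ ENNReal.ofReal δ := by
      apply ENNReal.ofReal_le_ofReal
      rw [← dist_eq_norm, dist_comm]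
      exact hs.le
    set f1 : X → ℂ := fun x => (T g : X → ℂ) x - (T (s : Lp ℂ p μ) : X → ℂ) x with hf1_def
    set f2 : X → ℂ := fun x => (T (s : Lp ℂ p μ) : X → ℂ) x - h x * (g : X → ℂ) x with hf2_def
    have hw_eq : w = f1 + f2 := by
      funext x
      simp only [hw_def, hf1_def, hf2_def, Pi.add_apply]
      ring
    have hf1_meas : AEStronglyMeasurable f1 μ :=
      (Lp.aestronglyMeasurable _).sub (Lp.aestronglyMeasurable _)
    have hf2_meas : AEStronglyMeasurable f2 μ :=
      (Lp.aestronglyMeasurable _).sub (hmeas_h.mul (Lp.aestronglyMeasurable g))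
    have term1 : eLpNorm f1 q μ ≤ C * ENNReal.ofReal δ := by
      have h1 : eLpNorm f1 q μ = ENNReal.ofReal ‖T g - T (s : Lp ℂ p μ)‖ := by
        rw [← eLpNorm_coe_Lp (T g - T (s : Lp ℂ p μ))]
        apply eLpNorm_congr_ae
        symm
        filter_upwards [Lp.coeFn_sub (T g) (T (s : Lp ℂ p μ))] with x hx
        rw [hx]
        rfl
      rw [h1]
      calc ENNReal.ofReal ‖T g - T (s : Lp ℂ p μ)‖
          = ENNReal.ofReal ‖T (g - (s : Lp ℂ p μ))‖ := by rw [map_sub]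
        _ ≤ ENNReal.ofReal (‖T‖ * ‖g - (s : Lp ℂ p μ)‖) :=
            ENNReal.ofReal_le_ofReal (T.le_opNorm _)
        _ = C * ENNReal.ofReal ‖g - (s : Lp ℂ p μ)‖ := by
            rw [ENNReal.ofReal_mul (norm_nonneg T)]
        _ ≤ C * ENNReal.ofReal δ := by
            apply mul_le_mul_right 
            rw [← norm_neg, neg_sub]
            exact hdist_le
    have term2 : eLpNorm f2 q μ ≤ eLpNorm h r μ * ENNReal.ofReal δ := by
      have h2 : eLpNorm f2 q μ
          = eLpNorm (fun x => h x * (((s : Lp ℂ p μ) : X → ℂ) x - (g : X → ℂ) x)) q μ := by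
        apply eLpNorm_congr_ae
        filter_upwards [hTs] with x hx
        simp only [hf2_def]
        rw [hx]
        ring
      rw [h2]
      calc eLpNorm (fun x => h x * (((s : Lp ℂ p μ) : X → ℂ) x - (g : X → ℂ) x)) q μ
          ≤ eLpNorm h r μ *
            eLpNorm (fun x => ((s : Lp ℂ p μ) : X → ℂ) x - (g : X → ℂ) x) p μ := by
            refine (eLpNorm_le_eLpNorm_mul_eLpNorm_of_nnnorm hmeas_h
              ((Lp.aestronglyMeasurable _).sub (Lp.aestronglyMeasurable g)) (· * ·) 1
              (Filter.Eventually.of_forall fun x => ?_)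
              (hpqr := ⟨by simpa only [one_div] using hqrp.symm⟩)).trans_eq (by rw [ENNReal.coe_one, one_mul]; rfl)
            rw [nnnorm_mul, one_mul]
        _ = eLpNorm h r μ * ENNReal.ofReal ‖(s : Lp ℂ p μ) - g‖ := by rw [hdist]
        _ ≤ eLpNorm h r μ * ENNReal.ofReal δ := mul_le_mul_right hdist_le _
    have total : eLpNorm w q μ ≤ K * ENNReal.ofReal δ := by
      rw [hw_eq]
      calc eLpNorm (f1 + f2) q μ ≤ eLpNorm f1 q μ + eLpNorm f2 q μ :=
            eLpNorm_add_le hf1_meas hf2_meas hq1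
        _ ≤ C * ENNReal.ofReal δ + eLpNorm h r μ * ENNReal.ofReal δ := add_le_add term1 term2
        _ = (C + eLpNorm h r μ) * ENNReal.ofReal δ := by rw [add_mul]
        _ ≤ K * ENNReal.ofReal δ := by
            apply mul_le_mul_left
            rw [hK_def]
            exact le_add_of_nonneg_right (zero_le)
    have hofδ : ENNReal.ofReal δ = (ε : ℝ≥0∞) / K := by
      rw [hδ_def, ENNReal.ofReal_toReal hεK_ne_top]
    calc eLpNorm w q μ ≤ K * ENNReal.ofReal δ := total
      _ = K * ((ε : ℝ≥0∞) / K) := by rw [hofδ]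
      _ = (ε : ℝ≥0∞) := ENNReal.mul_div_cancel hK0 hKtop
end

section
/- Let (X, Σ, μ) be a σ-finite measure space and 1 ≤ p ≤ ∞. A bounded linear operator T : L^p(μ) → L^p(μ) satisfies T(f·g) = f·T(g) for all f ∈ L^∞(μ) and g ∈ L^p(μ) if and only if there exists h ∈ L^∞(μ) such that T(g) = h·g for all g ∈ L^p(μ); in that case h may be chosen with ‖h‖_∞ ≤ ‖T‖. -/
open MeasureTheory Filter Topology ENNReal

private theorem key5 {X : Type*} [MeasurableSpace X] (μ : Measure X) [SigmaFinite μ]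
    (p : ℝ≥0∞) [Fact (1 ≤ p)]
    (T : Lp ℂ p μ →L[ℂ] Lp ℂ p μ)
    (hcomm : ∀ f : X → ℂ, MemLp f ∞ μ → ∀ g u : Lp ℂ p μ,
        (u : X → ℂ) =ᵐ[μ] (fun x => f x * (g : X → ℂ) x) →
        (T u : X → ℂ) =ᵐ[μ] fun x => f x * (T g : X → ℂ) x) :
    ∃ h : X → ℂ, MemLp h ∞ μ ∧ eLpNorm h ∞ μ ≤ ENNReal.ofReal ‖T‖ ∧
      ∀ g : Lp ℂ p μ, (T g : X → ℂ) =ᵐ[μ] fun x => h x * (g : X → ℂ) x := by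
  by_cases hptop : p = ∞
  · -- `p = ∞` : take `h = T 1`.
    subst hptop
    have hone : MemLp (fun _ : X => (1 : ℂ)) ∞ μ :=
      memLp_top_of_bound aestronglyMeasurable_const 1 (Eventually.of_forall (by simp))
    set e : Lp ℂ ∞ μ := hone.toLp _ with he
    have hnorm_e : ‖e‖ ≤ 1 := by
      rw [he, Lp.norm_toLp]
      refine ENNReal.toReal_le_of_le_ofReal zero_le_one ?_
      rw [eLpNorm_exponent_top]
      simpa using eLpNormEssSup_le_of_ae_bound (C := 1)
        (Eventually.of_forall (fun x => by simp))
    refine ⟨(T e : X → ℂ), Lp.memLp _, ?_, ?_⟩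
    · have h1 : eLpNorm (⇑(T e)) ∞ μ = ENNReal.ofReal ‖T e‖ := by
        rw [Lp.norm_def, ENNReal.ofReal_toReal (Lp.eLpNorm_ne_top _)]
      rw [h1]
      apply ENNReal.ofReal_le_ofReal
      calc ‖T e‖ ≤ ‖T‖ * ‖e‖ := T.le_opNorm e
        _ ≤ ‖T‖ * 1 := by gcongr
        _ = ‖T‖ := mul_one _
    · intro g
      have hge : (g : X → ℂ) =ᵐ[μ] fun x => (g : X → ℂ) x * (e : X → ℂ) x := by
        filter_upwards [hone.coeFn_toLp] with x hx
        rw [hx, mul_one]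
      have := hcomm _ (Lp.memLp g) e g hge
      filter_upwards [this] with x hx
      rw [hx, mul_comm]
  · -- `p < ∞`
    have hp1 : 1 ≤ p := Fact.out
    have hp0 : p ≠ 0 := (zero_lt_one.trans_le hp1).ne'
    have hq : 0 < p.toReal := ENNReal.toReal_pos hp0 hptop
    set s : ℕ → Set X := spanningSets μ with hs
    have hs_meas : ∀ n, MeasurableSet (s n) := measurableSet_spanningSets μ
    have hs_fin : ∀ n, μ (s n) ≠ ∞ := fun n => (measure_spanningSets_lt_top μ n).ne
    have hs_mono : Monotone s := monotone_spanningSets μ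
    have hs_univ : ∀ x : X, ∃ n, x ∈ s n := by
      intro x
      have h1 : x ∈ ⋃ n, s n := by rw [hs, iUnion_spanningSets]; trivial
      exact Set.mem_iUnion.mp h1
    set e : ℕ → Lp ℂ p μ := fun n => indicatorConstLp p (hs_meas n) (hs_fin n) (1 : ℂ) with he'
    have he : ∀ n, ⇑(e n) =ᵐ[μ] (s n).indicator (fun _ => (1:ℂ)) :=
      fun n => indicatorConstLp_coeFn
    have hindTop : ∀ (A : Set X), MeasurableSet A →
        MemLp (A.indicator (fun _ => (1:ℂ))) ∞ μ := by
      intro A hA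
      refine memLp_top_of_bound (aestronglyMeasurable_const.indicator hA) 1
        (Eventually.of_forall fun x => ?_)
      by_cases hx : x ∈ A
      · simp [Set.indicator_of_mem hx]
      · simp [Set.indicator_of_notMem hx]
    -- consistency of the (T (e n) : X → ℂ)
    have hcons : ∀ m n, m ≤ n →
        (T (e m) : X → ℂ) =ᵐ[μ] fun x => (s m).indicator (fun _ => (1:ℂ)) x * (T (e n) : X → ℂ) x := by
      intro m n hmn
      refine hcomm _ (hindTop _ (hs_meas m)) (e n) (e m) ?_
      filter_upwards [he m, he n] with x hxm hxn
      rw [hxm, hxn]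
      by_cases hx : x ∈ s m
      · simp [Set.indicator_of_mem hx, Set.indicator_of_mem (hs_mono hmn hx)]
      · simp [Set.indicator_of_notMem hx]
    have hae : ∀ᵐ x ∂μ, ∀ m n, m ≤ n →
        (T (e m) : X → ℂ) x = (s m).indicator (fun _ => (1:ℂ)) x * (T (e n) : X → ℂ) x := by
      rw [ae_all_iff]
      intro m
      rw [ae_all_iff]
      intro n
      by_cases hmn : m ≤ n
      · filter_upwards [hcons m n hmn] with x hx _
        exact hx
      · exact Eventually.of_forall fun x h => absurd h hmn
    -- the pointwise limit
    set h₀ : X → ℂ := fun x => limUnder atTop (fun n => (T (e n) : X → ℂ) x) with hh₀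
    have hlim : ∀ x, (∀ m n, m ≤ n → (T (e m) : X → ℂ) x = (s m).indicator (fun _ => (1:ℂ)) x * (T (e n) : X → ℂ) x) →
        ∀ n, x ∈ s n → Tendsto (fun k => (T (e k) : X → ℂ) x) atTop (𝓝 ((T (e n) : X → ℂ) x)) := by
      intro x hx n hxn
      apply tendsto_atTop_of_eventually_const (i₀ := n)
      intro k hk
      have h1 := hx n k hk
      rw [Set.indicator_of_mem hxn, one_mul] at h1
      exact h1.symm
    have hlim' : ∀ x, (∀ m n, m ≤ n → (T (e m) : X → ℂ) x = (s m).indicator (fun _ => (1:ℂ)) x * (T (e n) : X → ℂ) x) →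
        ∀ n, x ∈ s n → h₀ x = (T (e n) : X → ℂ) x := by
      intro x hx n hxn
      exact (hlim x hx n hxn).limUnder_eq
    have hm₀ : AEStronglyMeasurable h₀ μ := by
      apply aestronglyMeasurable_of_tendsto_ae atTop
        (fun n => (Lp.aestronglyMeasurable (T (e n))))
      filter_upwards [hae] with x hx
      obtain ⟨n, hxn⟩ := hs_univ x
      have ht := hlim x hx n hxn
      rw [hlim' x hx n hxn]
      exact ht
    set h : X → ℂ := hm₀.mk h₀ with hhdef
    have hh_sm : StronglyMeasurable h := hm₀.stronglyMeasurable_mk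
    have hhae : h₀ =ᵐ[μ] h := hm₀.ae_eq_mk
    -- step C : (T (e n) : X → ℂ) agrees a.e. with h on s n and vanishes off s n
    have hC : ∀ n, (T (e n) : X → ℂ) =ᵐ[μ] fun x => (s n).indicator (fun _ => (1:ℂ)) x * h x := by
      intro n
      filter_upwards [hae, hhae] with x hx hx2
      by_cases hxn : x ∈ s n
      · rw [Set.indicator_of_mem hxn, one_mul, ← hx2]
        exact (hlim' x hx n hxn).symm
      · rw [Set.indicator_of_notMem hxn, zero_mul]
        have h1 := hx n n le_rfl
        rwa [Set.indicator_of_notMem hxn, zero_mul] at h1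
    -- step D : essential bound on h
    have hb : ∀ᵐ x ∂μ, ‖h x‖ ≤ ‖T‖ := by
      by_contra hcon
      have h1 : μ {x | ¬ ‖h x‖ ≤ ‖T‖} ≠ 0 := by
        intro h0
        exact hcon h0
      have h2 : {x | ¬ ‖h x‖ ≤ ‖T‖} ⊆
          ⋃ (k : ℕ) (n : ℕ), ({x | ‖T‖ + 1/((k:ℝ)+1) ≤ ‖h x‖} ∩ s n) := by
        intro x hx
        rw [Set.mem_setOf_eq, not_le] at hx
        obtain ⟨k, hk⟩ := exists_nat_one_div_lt (sub_pos.mpr hx)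
        obtain ⟨n, hn⟩ := hs_univ x
        refine Set.mem_iUnion.mpr ⟨k, Set.mem_iUnion.mpr ⟨n, ⟨?_, hn⟩⟩⟩
        rw [Set.mem_setOf_eq]
        linarith
      have h3 : ∃ k n : ℕ, μ ({x | ‖T‖ + 1/((k:ℝ)+1) ≤ ‖h x‖} ∩ s n) ≠ 0 := by
        by_contra hcon2
        push_neg at hcon2
        apply h1
        refine measure_mono_null h2 ?_
        rw [measure_iUnion_null_iff]
        intro k
        rw [measure_iUnion_null_iff]
        intro n
        exact hcon2 k n
      obtain ⟨k, n, hA⟩ := h3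
      set ε : ℝ := 1/((k:ℝ)+1) with hε
      have hεpos : 0 < ε := by positivity
      set A : Set X := {x | ‖T‖ + ε ≤ ‖h x‖} ∩ s n with hAdef
      have hA_meas : MeasurableSet A :=
        (measurableSet_le measurable_const hh_sm.measurable.norm).inter (hs_meas n)
      have hA_fin : μ A ≠ ∞ :=
        ((measure_mono Set.inter_subset_right).trans_lt (measure_spanningSets_lt_top μ n)).ne
      set u := indicatorConstLp p hA_meas hA_fin (1 : ℂ) with hu_def
      have hu : ⇑u =ᵐ[μ] fun x => A.indicator (fun _ => (1:ℂ)) x * (e n : X → ℂ) x := by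
        filter_upwards [indicatorConstLp_coeFn (p := p) (hs := hA_meas) (hμs := hA_fin)
          (c := (1:ℂ)), he n] with x h1 h2
        rw [h1, h2]
        by_cases hx : x ∈ A
        · rw [Set.indicator_of_mem hx, Set.indicator_of_mem hx.2, mul_one]
        · simp [Set.indicator_of_notMem hx]
      have hTu := hcomm _ (hindTop A hA_meas) (e n) u hu
      have hTu2 : ⇑(T u) =ᵐ[μ] fun x => A.indicator (fun _ => (1:ℂ)) x * h x := by
        filter_upwards [hTu, hC n] with x h1 h2
        rw [h1, h2]
        by_cases hx : x ∈ A
        · rw [Set.indicator_of_mem hx, Set.indicator_of_mem hx.2]; ring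
        · simp [Set.indicator_of_notMem hx]
      -- lower bound on `eLpNorm (T u)`
      have hlow : ENNReal.ofReal (‖T‖ + ε) * μ A ^ (1/p.toReal) ≤ eLpNorm (⇑(T u)) p μ := by
        have hmono : eLpNorm (A.indicator fun _ => ((‖T‖ + ε : ℝ) : ℂ)) p μ
            ≤ eLpNorm (⇑(T u)) p μ := by
          apply eLpNorm_mono_ae
          filter_upwards [hTu2] with x hx
          rw [hx]
          by_cases hxA : x ∈ A
          · rw [Set.indicator_of_mem hxA, Set.indicator_of_mem hxA, norm_mul, norm_one, one_mul]
            rw [Complex.norm_real, Real.norm_eq_abs, abs_of_nonneg (by positivity)]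
            exact hxA.1
          · simp [Set.indicator_of_notMem hxA]
        refine le_trans (le_of_eq ?_) hmono
        rw [eLpNorm_indicator_const hA_meas hp0 hptop]
        congr 1
        rw [← ofReal_norm, Complex.norm_real, Real.norm_eq_abs,
          abs_of_nonneg (by positivity)]
      -- upper bound on `eLpNorm (T u)`
      have hup : eLpNorm (⇑(T u)) p μ ≤ ENNReal.ofReal ‖T‖ * μ A ^ (1/p.toReal) := by
        have h1 : eLpNorm (⇑(T u)) p μ = ENNReal.ofReal ‖T u‖ := by
          rw [Lp.norm_def, ENNReal.ofReal_toReal (Lp.eLpNorm_ne_top _)]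
        have h2 : ENNReal.ofReal ‖u‖ = μ A ^ (1/p.toReal) := by
          rw [Lp.norm_def, ENNReal.ofReal_toReal (Lp.eLpNorm_ne_top _),
            eLpNorm_congr_ae (indicatorConstLp_coeFn),
            eLpNorm_indicator_const hA_meas hp0 hptop]
          simp
        rw [h1, ← h2, ← ENNReal.ofReal_mul (norm_nonneg _)]
        exact ENNReal.ofReal_le_ofReal (T.le_opNorm u)
      have hBpos : μ A ^ (1/p.toReal) ≠ 0 := by
        intro h0
        rw [ENNReal.rpow_eq_zero_iff] at h0
        rcases h0 with ⟨h0, _⟩ | ⟨h0, hneg⟩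
        · exact hA h0
        · exact hA_fin h0
      have hBfin : μ A ^ (1/p.toReal) ≠ ∞ :=
        ENNReal.rpow_ne_top_of_nonneg (by positivity) hA_fin
      have hfinal := le_trans hlow hup
      rw [ENNReal.mul_le_mul_iff_left hBpos hBfin] at hfinal
      rw [ENNReal.ofReal_le_ofReal_iff (norm_nonneg _)] at hfinal
      linarith
    have hhTop : MemLp h ∞ μ := by
      refine ⟨hh_sm.aestronglyMeasurable, ?_⟩
      rw [eLpNorm_exponent_top]
      exact (eLpNormEssSup_le_of_ae_bound hb).trans_lt ENNReal.ofReal_lt_top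
    have hnorm : eLpNorm h ∞ μ ≤ ENNReal.ofReal ‖T‖ := by
      rw [eLpNorm_exponent_top]
      exact eLpNormEssSup_le_of_ae_bound hb
    refine ⟨h, hhTop, hnorm, ?_⟩
    -- step E : T g = h • g for every g
    intro g
    set G : X → ℂ := ⇑g with hGdef
    have hGsm : StronglyMeasurable G := Lp.stronglyMeasurable g
    set B : ℕ → Set X := fun n => s n ∩ {x | ‖G x‖ ≤ (n:ℝ)} with hBdef
    have hB_meas : ∀ n, MeasurableSet (B n) :=
      fun n => (hs_meas n).inter (measurableSet_le hGsm.measurable.norm measurable_const)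
    set f : ℕ → X → ℂ := fun n => (B n).indicator G with hfdef
    have hf_sm : ∀ n, StronglyMeasurable (f n) := fun n => hGsm.indicator (hB_meas n)
    have hf_le : ∀ n x, ‖f n x‖ ≤ ‖G x‖ := by
      intro n x
      by_cases hx : x ∈ B n
      · rw [hfdef]; simp only [Set.indicator_of_mem hx]; exact le_rfl
      · rw [hfdef]; simp only [Set.indicator_of_notMem hx, norm_zero]; positivity
    have hfTop : ∀ n, MemLp (f n) ∞ μ := by
      intro n
      refine memLp_top_of_bound (hf_sm n).aestronglyMeasurable n
        (Eventually.of_forall fun x => ?_)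
      by_cases hx : x ∈ B n
      · rw [hfdef]; simp only [Set.indicator_of_mem hx]; exact hx.2
      · rw [hfdef]; simp only [Set.indicator_of_notMem hx, norm_zero]; positivity
    have hfp : ∀ n, MemLp (f n) p μ := fun n =>
      (Lp.memLp g).of_le (hf_sm n).aestronglyMeasurable (Eventually.of_forall (hf_le n))
    set u : ℕ → Lp ℂ p μ := fun n => (hfp n).toLp (f n) with hudef
    have hu : ∀ n, ⇑(u n) =ᵐ[μ] fun x => f n x * (e n : X → ℂ) x := by
      intro n
      filter_upwards [(hfp n).coeFn_toLp, he n] with x h1 h2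
      rw [h1, h2]
      by_cases hx : x ∈ s n
      · rw [Set.indicator_of_mem hx, mul_one]
      · rw [Set.indicator_of_notMem hx, mul_zero]
        have hxB : x ∉ B n := fun hc => hx hc.1
        rw [hfdef]; simp only [Set.indicator_of_notMem hxB]
    have hTu : ∀ n, ⇑(T (u n)) =ᵐ[μ] fun x => h x * f n x := by
      intro n
      filter_upwards [hcomm _ (hfTop n) (e n) (u n) (hu n), hC n] with x h1 h2
      rw [h1, h2]
      by_cases hx : x ∈ s n
      · rw [Set.indicator_of_mem hx, one_mul, mul_comm]
      · have hxB : x ∉ B n := fun hc => hx hc.1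
        rw [Set.indicator_of_notMem hx, zero_mul, mul_zero]
        have : f n x = 0 := by rw [hfdef]; simp only [Set.indicator_of_notMem hxB]
        rw [this, mul_zero]
    have hmemn : ∀ n, MemLp (fun x => h x * f n x) p μ := by
      intro n
      have h1 := (hfp n).smul (r := p) hhTop
      exact h1
    have hmemg : MemLp (fun x => h x * G x) p μ := by
      have h1 := (Lp.memLp g).smul (r := p) hhTop
      exact h1
    have hTu_eq : ∀ n, T (u n) = (hmemn n).toLp _ := by
      intro n
      apply Lp.ext
      exact (hTu n).trans ((hmemn n).coeFn_toLp).symm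
    -- convergence of truncations in ℒp
    have hdom : Tendsto (fun n => ∫⁻ x, (‖f n x - G x‖₊ : ℝ≥0∞) ^ p.toReal ∂μ)
        atTop (𝓝 0) := by
      have hG2 : ∫⁻ x, (‖G x‖₊ : ℝ≥0∞) ^ p.toReal ∂μ < ∞ := by
        have h1 := (Lp.memLp g).eLpNorm_lt_top
        rw [eLpNorm_eq_lintegral_rpow_enorm_toReal hp0 hptop] at h1
        by_contra hI
        rw [not_lt, top_le_iff] at hI
        rw [show (∫⁻ (x : X), ‖(g : X → ℂ) x‖ₑ ^ p.toReal ∂μ) = ∞ from hI, ENNReal.top_rpow_of_pos (by positivity)] at h1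
        exact lt_irrefl _ h1
      have hbound_int : ∫⁻ x, ((2:ℝ≥0∞) * ‖G x‖₊) ^ p.toReal ∂μ ≠ ∞ := by
        have heq : ∀ x : X, ((2:ℝ≥0∞) * ‖G x‖₊) ^ p.toReal
            = (2:ℝ≥0∞) ^ p.toReal * (‖G x‖₊ : ℝ≥0∞) ^ p.toReal :=
          fun x => ENNReal.mul_rpow_of_nonneg _ _ hq.le
        simp_rw [heq]
        rw [lintegral_const_mul _ (hGsm.measurable.nnnorm.coe_nnreal_ennreal.pow_const _)]
        exact ENNReal.mul_ne_top
          (ENNReal.rpow_ne_top_of_nonneg hq.le (by norm_num)) hG2.ne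
      have h0 : (0 : ℝ≥0∞) = ∫⁻ _x, (fun _ : X => (0:ℝ≥0∞)) _x ∂μ := by simp
      rw [h0]
      refine tendsto_lintegral_of_dominated_convergence
        (bound := fun x => ((2:ℝ≥0∞) * ‖G x‖₊) ^ p.toReal)
        (fun n => (((hf_sm n).measurable.sub hGsm.measurable).nnnorm.coe_nnreal_ennreal).pow_const _)
        ?_ hbound_int ?_
      · intro n
        refine Eventually.of_forall fun x => ?_
        apply ENNReal.rpow_le_rpow _ hq.le
        calc (‖f n x - G x‖₊ : ℝ≥0∞) ≤ (‖f n x‖₊ : ℝ≥0∞) + ‖G x‖₊ := by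
              norm_cast
              exact nnnorm_sub_le _ _
          _ ≤ (‖G x‖₊ : ℝ≥0∞) + ‖G x‖₊ := by
              gcongr
              norm_cast
              exact hf_le n x
          _ = 2 * ‖G x‖₊ := (two_mul _).symm
      · refine Eventually.of_forall fun x => ?_
        obtain ⟨m, hm⟩ := hs_univ x
        obtain ⟨N, hN⟩ := exists_nat_ge ‖G x‖
        apply tendsto_atTop_of_eventually_const (i₀ := max m N)
        intro k hk
        have hxB : x ∈ B k := by
          constructor
          · exact hs_mono (le_trans (le_max_left m N) hk) hm
          · refine le_trans hN ?_
            exact_mod_cast le_trans (le_max_right m N) hk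
        have hfx : f k x = G x := by rw [hfdef]; simp only [Set.indicator_of_mem hxB]
        rw [hfx, sub_self, nnnorm_zero, ENNReal.coe_zero,
          ENNReal.zero_rpow_of_pos hq]
    have ha : Tendsto (fun n => eLpNorm (fun x => f n x - G x) p μ) atTop (𝓝 0) := by
      have heq : ∀ n, eLpNorm (fun x => f n x - G x) p μ
          = (∫⁻ x, (‖f n x - G x‖₊ : ℝ≥0∞) ^ p.toReal ∂μ) ^ (1/p.toReal) :=
        fun n => eLpNorm_eq_lintegral_rpow_enorm_toReal hp0 hptop
      simp_rw [heq]
      have hcont := (ENNReal.continuous_rpow_const (y := 1/p.toReal)).tendsto 0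
      have h1 := hcont.comp hdom
      rw [ENNReal.zero_rpow_of_pos (by positivity)] at h1
      exact h1
    have hfin_a : ∀ n, eLpNorm (fun x => f n x - G x) p μ ≠ ∞ := by
      intro n
      exact ((hfp n).sub (Lp.memLp g)).eLpNorm_ne_top
    -- u n → g in Lp
    have hnorm_un : ∀ n, ‖u n - g‖ = (eLpNorm (fun x => f n x - G x) p μ).toReal := by
      intro n
      rw [Lp.norm_def]
      congr 1
      apply eLpNorm_congr_ae
      filter_upwards [Lp.coeFn_sub (u n) g, (hfp n).coeFn_toLp] with x h1 h2
      rw [h1, Pi.sub_apply, h2]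
    have hun_tendsto : Tendsto u atTop (𝓝 g) := by
      rw [tendsto_iff_dist_tendsto_zero]
      simp_rw [dist_eq_norm, hnorm_un]
      have h1 := (ENNReal.tendsto_toReal (a := 0) (by simp)).comp ha
      simpa [Function.comp_def] using h1
    -- (hmemn n).toLp → hmemg.toLp in Lp
    have hw_tendsto : Tendsto (fun n => (hmemn n).toLp _) atTop (𝓝 (hmemg.toLp _)) := by
      rw [tendsto_iff_dist_tendsto_zero]
      have hdist : ∀ n, dist ((hmemn n).toLp _) (hmemg.toLp _)
          = (eLpNorm ((fun x => h x * f n x) - fun x => h x * G x) p μ).toReal := by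
        intro n
        rw [dist_eq_norm, ← MemLp.toLp_sub, Lp.norm_toLp]
      simp_rw [hdist]
      have hbnd : ∀ n, eLpNorm ((fun x => h x * f n x) - fun x => h x * G x) p μ
          ≤ eLpNorm h ∞ μ * eLpNorm (fun x => f n x - G x) p μ := by
        intro n
        have hfuneq : ((fun x => h x * f n x) - fun x => h x * G x)
            = h • (fun x => f n x - G x) := by
          funext x
          simp [mul_sub]
        rw [hfuneq]
        exact eLpNorm_smul_le_eLpNorm_top_mul_eLpNorm p
          ((hf_sm n).sub hGsm).aestronglyMeasurable h
      have hup : Tendsto (fun n => (eLpNorm h ∞ μ * eLpNorm (fun x => f n x - G x) p μ).toReal)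
          atTop (𝓝 0) := by
        have h1 : Tendsto (fun n => eLpNorm h ∞ μ * eLpNorm (fun x => f n x - G x) p μ)
            atTop (𝓝 0) := by
          have h2 := ENNReal.Tendsto.const_mul ha (Or.inr hhTop.eLpNorm_ne_top)
          rwa [mul_zero] at h2
        have h3 := (ENNReal.tendsto_toReal (a := 0) (by simp)).comp h1
        simpa [Function.comp_def] using h3
      refine squeeze_zero (fun n => ENNReal.toReal_nonneg) (fun n => ?_) hup
      refine ENNReal.toReal_mono ?_ (hbnd n)
      exact ENNReal.mul_ne_top hhTop.eLpNorm_ne_top (hfin_a n)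
    have hTg : T g = hmemg.toLp _ := by
      have h1 : Tendsto (fun n => T (u n)) atTop (𝓝 (T g)) :=
        (T.continuous.tendsto g).comp hun_tendsto
      have h2 : Tendsto (fun n => T (u n)) atTop (𝓝 (hmemg.toLp _)) :=
        hw_tendsto.congr fun n => (hTu_eq n).symm
      exact tendsto_nhds_unique h1 h2
    rw [hTg]
    exact hmemg.coeFn_toLp

/-- A bounded operator `T` on `L^p(μ)` (`1 ≤ p ≤ ∞`, σ-finite `μ`) commutes with
the pointwise action of `L^∞(μ)` if and only if it is pointwise multiplication
by some `h ∈ L^∞(μ)`; in that case `h` may be chosen with `‖h‖_∞ ≤ ‖T‖`. -/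
theorem stmt5 {X : Type*} [MeasurableSpace X] (μ : Measure X) [SigmaFinite μ]
    (p : ℝ≥0∞) [Fact (1 ≤ p)]
    (T : Lp ℂ p μ →L[ℂ] Lp ℂ p μ) :
    ((∀ f : X → ℂ, MemLp f ∞ μ → ∀ g u : Lp ℂ p μ,
        (u : X → ℂ) =ᵐ[μ] (fun x => f x * (g : X → ℂ) x) →
        (T u : X → ℂ) =ᵐ[μ] fun x => f x * (T g : X → ℂ) x) ↔
      (∃ h : X → ℂ, MemLp h ∞ μ ∧
        ∀ g : Lp ℂ p μ, (T g : X → ℂ) =ᵐ[μ] fun x => h x * (g : X → ℂ) x)) ∧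
    ((∀ f : X → ℂ, MemLp f ∞ μ → ∀ g u : Lp ℂ p μ,
        (u : X → ℂ) =ᵐ[μ] (fun x => f x * (g : X → ℂ) x) →
        (T u : X → ℂ) =ᵐ[μ] fun x => f x * (T g : X → ℂ) x) →
      ∃ h : X → ℂ, MemLp h ∞ μ ∧ eLpNorm h ∞ μ ≤ ENNReal.ofReal ‖T‖ ∧
        ∀ g : Lp ℂ p μ, (T g : X → ℂ) =ᵐ[μ] fun x => h x * (g : X → ℂ) x) := by
  constructor
  · constructor
    · intro hcomm
      obtain ⟨h, h1, _, h3⟩ := key5 μ p T hcomm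
      exact ⟨h, h1, h3⟩
    · rintro ⟨h, _hmem, hg⟩ f _hf g u hu
      filter_upwards [hg u, hg g, hu] with x hx1 hx2 hxu
      rw [hx1, hxu, hx2]
      ring
  · exact fun hcomm => key5 μ p T hcomm
end

section
/- Let (X, Σ, μ) be a σ-finite measure space which is atomless (every measurable set of positive measure contains a measurable subset of strictly smaller positive measure), and let 1 ≤ p < q ≤ ∞. Then every bounded linear map T : L^p(μ) → L^q(μ) satisfying T(f·g) = f·T(g) for all f ∈ L^∞(μ) and g ∈ L^p(μ) is the zero map. -/
open MeasureTheory Filter Topology ENNReal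

private lemma aux_small {X : Type*} [MeasurableSpace X] (ν : Measure X)
    (hfin : ν Set.univ ≠ ∞)
    (hat : ∀ s : Set X, MeasurableSet s → 0 < ν s →
      ∃ t ⊆ s, MeasurableSet t ∧ 0 < ν t ∧ ν t < ν s) :
    ∀ s : Set X, MeasurableSet s → 0 < ν s → ∀ ε : ℝ≥0∞, 0 < ε →
      ∃ t ⊆ s, MeasurableSet t ∧ 0 < ν t ∧ ν t ≤ ε := by
  have key : ∀ (k : ℕ) (s : Set X), MeasurableSet s → 0 < ν s →
      ∃ t ⊆ s, MeasurableSet t ∧ 0 < ν t ∧ ν t ≤ ν s * 2⁻¹ ^ k := by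
    intro k
    induction k with
    | zero => intro s hs h0; exact ⟨s, le_rfl, hs, h0, by simp⟩
    | succ k ih =>
      intro s hs h0
      obtain ⟨t, hts, ht, h0t, hle⟩ := ih s hs h0
      obtain ⟨t', ht's, ht', h0', hlt⟩ := hat t ht h0t
      have htfin : ν t ≠ ∞ := (lt_of_le_of_lt (measure_mono (Set.subset_univ t))
        hfin.lt_top).ne
      have ht'fin : ν t' ≠ ∞ := (lt_of_le_of_lt (measure_mono ht's) htfin.lt_top).ne
      have hsum : ν t' + ν (t \ t') = ν t := by
        rw [← measure_union (Set.disjoint_sdiff_right) (ht.diff ht'), Set.union_diff_cancel ht's]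
      have hstep : ν s * 2⁻¹ ^ (k + 1) = ν s * 2⁻¹ ^ k * 2⁻¹ := by
        rw [pow_succ, mul_assoc]
      rcases le_total (ν t') (ν (t \ t')) with hc | hc
      · refine ⟨t', ht's.trans hts, ht', h0', ?_⟩
        have h2 : ν t' + ν t' ≤ ν t := hsum ▸ add_le_add_right hc _
        have : 2 * ν t' ≤ ν t := by rw [two_mul]; exact h2
        calc ν t' ≤ ν t * 2⁻¹ := by
              rw [← div_eq_mul_inv, ENNReal.le_div_iff_mul_le (Or.inl two_ne_zero) (Or.inl ofNat_ne_top), mul_comm]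
              exact this
            _ ≤ ν s * 2⁻¹ ^ k * 2⁻¹ := by gcongr
            _ = ν s * 2⁻¹ ^ (k + 1) := hstep.symm
      · have h0d : 0 < ν (t \ t') := by
          by_contra hz
          push_neg at hz
          have : ν (t \ t') = 0 := le_antisymm hz (zero_le)
          rw [this, add_zero] at hsum
          exact absurd hsum.symm hlt.ne'
        refine ⟨t \ t', (Set.diff_subset).trans hts, ht.diff ht', h0d, ?_⟩
        have h2 : ν (t \ t') + ν (t \ t') ≤ ν t := hsum ▸ add_le_add_left hc _
        have : 2 * ν (t \ t') ≤ ν t := by rw [two_mul]; exact h2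
        calc ν (t \ t') ≤ ν t * 2⁻¹ := by
              rw [← div_eq_mul_inv, ENNReal.le_div_iff_mul_le (Or.inl two_ne_zero) (Or.inl ofNat_ne_top), mul_comm]
              exact this
            _ ≤ ν s * 2⁻¹ ^ k * 2⁻¹ := by gcongr
            _ = ν s * 2⁻¹ ^ (k + 1) := hstep.symm
  intro s hs h0 ε hε
  have hsfin : ν s ≠ ∞ := (lt_of_le_of_lt (measure_mono (Set.subset_univ s)) hfin.lt_top).ne
  obtain ⟨k, hk⟩ := ENNReal.exists_inv_two_pow_lt (ENNReal.div_pos hε.ne' hsfin).ne'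
  obtain ⟨t, hts, ht, h0t, hle⟩ := key k s hs h0
  refine ⟨t, hts, ht, h0t, hle.trans ?_⟩
  calc ν s * 2⁻¹ ^ k ≤ ν s * (ε / ν s) := mul_le_mul_right hk.le _
    _ ≤ ε := ENNReal.mul_div_le

private lemma aux_zero {a c : ℝ≥0∞} {r : ℝ} (hc : c ≠ ∞) (hr : 0 < r)
    (h : ∀ ε : ℝ≥0∞, 0 < ε → ε ≠ ∞ → a ≤ c * ε ^ r) : a = 0 := by
  by_contra ha0
  have ha0' : 0 < a := pos_iff_ne_zero.mpr ha0
  rcases eq_or_ne c 0 with hc0 | hc0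
  · have := h 1 one_pos one_ne_top
    simp [hc0] at this
    exact ha0 this
  have hafin : a ≠ ∞ := by
    intro hatop
    have := h 1 one_pos one_ne_top
    rw [hatop, ENNReal.one_rpow, mul_one] at this
    exact hc (top_le_iff.mp this)
  set ε : ℝ≥0∞ := (a / (2 * c)) ^ (1 / r) with hε
  have h2c0 : (2 : ℝ≥0∞) * c ≠ 0 := by simp [hc0]
  have h2ct : (2 : ℝ≥0∞) * c ≠ ∞ := by
    simp [ENNReal.mul_ne_top, hc]
  have hbase0 : a / (2 * c) ≠ 0 := (ENNReal.div_pos ha0 h2ct).ne'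
  have hbaset : a / (2 * c) ≠ ∞ := by
    rw [Ne, ENNReal.div_eq_top]
    push_neg
    exact ⟨fun _ => h2c0, fun h' => absurd h' hafin⟩
  have hε0 : 0 < ε := by
    apply ENNReal.rpow_pos (pos_iff_ne_zero.mpr hbase0) hbaset
  have hεt : ε ≠ ∞ := by
    rw [hε]
    exact (ENNReal.rpow_lt_top_of_nonneg (by positivity) hbaset).ne
  have hεr : ε ^ r = a / (2 * c) := by
    rw [hε, ← ENNReal.rpow_mul, one_div, inv_mul_cancel₀ hr.ne', ENNReal.rpow_one]
  have := h ε hε0 hεt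
  rw [hεr] at this
  have hkey : c * (a / (2 * c)) = a / 2 := by
    rw [ENNReal.div_eq_inv_mul, ENNReal.mul_inv (Or.inl two_ne_zero) (Or.inl ofNat_ne_top),
      ENNReal.div_eq_inv_mul]
    rw [← mul_assoc, mul_comm c, mul_assoc, mul_assoc, ← mul_assoc c⁻¹ c,
      ENNReal.inv_mul_cancel hc0 hc, one_mul]
  rw [hkey] at this
  exact absurd this (not_le.mpr (ENNReal.half_lt_self ha0 hafin))

private lemma aux_partition {X : Type*} [MeasurableSpace X] (ν : Measure X)
    (hfin : ν Set.univ ≠ ∞)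
    (hsmall : ∀ s : Set X, MeasurableSet s → 0 < ν s → ∀ ε : ℝ≥0∞, 0 < ε →
      ∃ t ⊆ s, MeasurableSet t ∧ 0 < ν t ∧ ν t ≤ ε)
    (s : Set X) (hs : MeasurableSet s) (ε : ℝ≥0∞) (hε : 0 < ε) (hεt : ε ≠ ∞) :
    ∃ t : ℕ → Set X, (∀ k, MeasurableSet (t k)) ∧ (∀ k, t k ⊆ s) ∧
      Pairwise (Function.onFun Disjoint t) ∧ (∀ k, ν (t k) ≤ ε) ∧
      ν (s \ ⋃ k, t k) = 0 := by
  classical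
  set α : Set X → ℝ≥0∞ :=
    fun r => ⨆ (t : Set X) (_ : t ⊆ r ∧ MeasurableSet t ∧ ν t ≤ ε), ν t with hαdef
  have hα_le : ∀ r, α r ≤ ε := fun r =>
    iSup_le fun t => iSup_le fun ht => ht.2.2
  have hle_α : ∀ r t, t ⊆ r → MeasurableSet t → ν t ≤ ε → ν t ≤ α r := by
    intro r t h1 h2 h3
    exact le_iSup_of_le t (le_iSup_of_le ⟨h1, h2, h3⟩ le_rfl)
  have hα_mono : ∀ r r' : Set X, r ⊆ r' → α r ≤ α r' := by
    intro r r' hrr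
    refine iSup_le fun t => iSup_le fun ht => ?_
    exact hle_α r' t (ht.1.trans hrr) ht.2.1 ht.2.2
  -- choice of near-maximal admissible subsets
  have hC : ∀ r : {r : Set X // MeasurableSet r}, ∃ t : Set X,
      t ⊆ r.1 ∧ MeasurableSet t ∧ ν t ≤ ε ∧ α r.1 ≤ 2 * ν t := by
    rintro ⟨r, hr⟩
    rcases eq_or_ne (α r) 0 with h0 | h0
    · exact ⟨∅, Set.empty_subset r, MeasurableSet.empty, by simp, by simp [h0]⟩
    · have hαfin : α r ≠ ∞ := ((hα_le r).trans_lt hεt.lt_top).ne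
      have hhalf : α r / 2 < α r := ENNReal.half_lt_self h0 hαfin
      rw [hαdef] at hhalf
      simp only [lt_iSup_iff] at hhalf
      obtain ⟨t, ⟨ht1, ht2, ht3⟩, htgt⟩ := hhalf
      refine ⟨t, ht1, ht2, ht3, ?_⟩
      have := (ENNReal.div_lt_iff (Or.inl two_ne_zero) (Or.inl ofNat_ne_top)).mp htgt
      rw [mul_comm] at this
      exact this.le
  choose tf htf1 htf2 htf3 htf4 using hC
  -- the recursive sequence of remainders
  set rs : ℕ → {r : Set X // MeasurableSet r} :=
    fun k => Nat.rec ⟨s, hs⟩ (fun _ p => ⟨p.1 \ tf p, p.2.diff (htf2 p)⟩) k with hrs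
  set t : ℕ → Set X := fun k => tf (rs k) with ht
  have hrs_succ : ∀ k, (rs (k + 1)).1 = (rs k).1 \ t k := fun k => rfl
  have hrs_sub_s : ∀ k, (rs k).1 ⊆ s := by
    intro k
    induction k with
    | zero => exact le_rfl
    | succ k ih => rw [hrs_succ]; exact (Set.diff_subset).trans ih
  have ht_meas : ∀ k, MeasurableSet (t k) := fun k => htf2 (rs k)
  have ht_sub : ∀ k, t k ⊆ (rs k).1 := fun k => htf1 (rs k)
  have ht_sub_s : ∀ k, t k ⊆ s := fun k => (ht_sub k).trans (hrs_sub_s k)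
  have ht_le : ∀ k, ν (t k) ≤ ε := fun k => htf3 (rs k)
  have hrs_anti : ∀ j k, k ≤ j → (rs j).1 ⊆ (rs k).1 := by
    intro j k hkj
    induction j with
    | zero => rw [Nat.le_zero.mp hkj]
    | succ j ih =>
      rcases Nat.lt_or_ge k (j + 1) with h | h
      · exact (hrs_succ j ▸ Set.diff_subset).trans (ih (Nat.lt_succ_iff.mp h))
      · rw [Nat.le_antisymm hkj h]
  have hdisj : Pairwise (Function.onFun Disjoint t) := by
    have key : ∀ i j, i < j → Disjoint (t i) (t j) := by
      intro i j hij
      have : t j ⊆ (rs (i + 1)).1 := (ht_sub j).trans (hrs_anti j (i + 1) hij)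
      rw [hrs_succ] at this
      exact Set.disjoint_sdiff_right.mono_right this
    intro i j hij
    rcases hij.lt_or_gt with h | h
    · exact key i j h
    · exact (key j i h).symm
  have hsum : ∑' k, ν (t k) ≤ ν s := by
    rw [← measure_iUnion hdisj ht_meas]
    exact measure_mono (Set.iUnion_subset ht_sub_s)
  have hsum_fin : ∑' k, ν (t k) ≠ ∞ :=
    (hsum.trans_lt ((measure_mono (Set.subset_univ s)).trans_lt hfin.lt_top)).ne
  refine ⟨t, ht_meas, ht_sub_s, hdisj, ht_le, ?_⟩
  set R := s \ ⋃ k, t k with hR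
  have hRmeas : MeasurableSet R := hs.diff (MeasurableSet.iUnion ht_meas)
  by_contra hν0
  have hνR : 0 < ν R := pos_iff_ne_zero.mpr hν0
  obtain ⟨t', ht'R, ht'meas, ht'0, ht'ε⟩ := hsmall R hRmeas hνR ε hε
  have hR_sub_rs : ∀ k, R ⊆ (rs k).1 := by
    intro k
    induction k with
    | zero => exact Set.diff_subset
    | succ k ih =>
      rw [hrs_succ]
      intro x hx
      exact ⟨ih hx, fun hxt => hx.2 (Set.mem_iUnion.mpr ⟨k, hxt⟩)⟩
  have hkey : ∀ k, ν t' ≤ 2 * ν (t k) := by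
    intro k
    exact (hle_α _ t' (ht'R.trans (hR_sub_rs k)) ht'meas ht'ε).trans (htf4 (rs k))
  -- find k with ν (t k) < ν t' / 2
  have ht'fin : ν t' ≠ ∞ := (ht'ε.trans_lt hεt.lt_top).ne
  obtain ⟨k, hk⟩ : ∃ k, ν (t k) < ν t' / 2 := by
    by_contra hall
    push_neg at hall
    have hhalf0 : ν t' / 2 ≠ 0 := (ENNReal.div_pos ht'0.ne' ofNat_ne_top).ne'
    have : (∞ : ℝ≥0∞) ≤ ∑' k, ν (t k) := by
      calc (∞ : ℝ≥0∞) = ∑' _ : ℕ, ν t' / 2 := (ENNReal.tsum_const_eq_top_of_ne_zero hhalf0).symm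
        _ ≤ ∑' k, ν (t k) := ENNReal.tsum_le_tsum hall
    exact hsum_fin (top_le_iff.mp this)
  have : ν t' < ν t' := by
    calc ν t' ≤ 2 * ν (t k) := hkey k
      _ < 2 * (ν t' / 2) := by
          exact (ENNReal.mul_lt_mul_iff_right two_ne_zero ofNat_ne_top).mpr hk
      _ ≤ ν t' := by
          exact ENNReal.mul_div_le
  exact absurd this (lt_irrefl _)

private lemma aux_withDensity_atomless {X : Type*} [MeasurableSpace X] (μ : Measure X)
    (hat : ∀ s : Set X, MeasurableSet s → 0 < μ s →
      ∃ t ⊆ s, MeasurableSet t ∧ 0 < μ t ∧ μ t < μ s)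
    (w : X → ℝ≥0∞) (hw : Measurable w) (hfin : μ.withDensity w Set.univ ≠ ∞) :
    ∀ s : Set X, MeasurableSet s → 0 < μ.withDensity w s →
      ∃ t ⊆ s, MeasurableSet t ∧ 0 < μ.withDensity w t ∧
        μ.withDensity w t < μ.withDensity w s := by
  set ν := μ.withDensity w with hν
  have happ : ∀ A : Set X, MeasurableSet A → ν A = ∫⁻ x in A, w x ∂μ :=
    fun A hA => withDensity_apply w hA
  -- positivity of ν on positive-μ subsets of {0 < w}
  have hpos : ∀ A : Set X, MeasurableSet A → A ⊆ {x | 0 < w x} → 0 < μ A → 0 < ν A := by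
    intro A hA hAw hμA
    rw [pos_iff_ne_zero]
    intro h0
    rw [happ A hA, lintegral_eq_zero_iff hw] at h0
    rw [EventuallyEq, ae_restrict_iff' hA] at h0
    have : μ {x | ¬(x ∈ A → w x = 0)} = 0 := by
      simpa [ae_iff] using h0
    have hsub : A ⊆ {x | ¬(x ∈ A → w x = 0)} := by
      intro x hx
      simp only [Set.mem_setOf_eq, Classical.not_imp]
      exact ⟨hx, (hAw hx).ne'⟩
    exact absurd (le_antisymm ((measure_mono hsub).trans this.le) (zero_le)) hμA.ne'
  -- ν vanishes on {w = 0}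
  have hzero : ∀ A : Set X, MeasurableSet A → A ⊆ {x | ¬0 < w x} → ν A = 0 := by
    intro A hA hAw
    rw [happ A hA]
    rw [setLIntegral_eq_zero_iff hA hw]
    exact ae_of_all _ fun x hx => by simpa using (hAw hx)
  intro s hs hνs
  set s₁ := s ∩ {x | 0 < w x} with hs₁def
  have hwset : MeasurableSet {x | 0 < w x} := measurableSet_lt measurable_const hw
  have hs₁ : MeasurableSet s₁ := hs.inter hwset
  have hν_s₁ : 0 < ν s₁ := by
    rw [pos_iff_ne_zero]
    intro h0
    have h2 : ν (s \ s₁) = 0 := by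
      apply hzero _ (hs.diff hs₁)
      intro x hx
      exact fun hw0 => hx.2 ⟨hx.1, hw0⟩
    have : ν s ≤ ν s₁ + ν (s \ s₁) := by
      have h3 := measure_le_inter_add_diff ν s s₁
      rwa [Set.inter_eq_self_of_subset_right Set.inter_subset_left] at h3
    rw [h0, h2, add_zero] at this
    exact absurd (le_antisymm this (zero_le)) hνs.ne'
  have hμ_s₁ : 0 < μ s₁ := by
    rw [pos_iff_ne_zero]
    intro h0
    have : ν s₁ = 0 := by
      rw [happ _ hs₁, Measure.restrict_eq_zero.mpr h0, lintegral_zero_measure]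
    exact hν_s₁.ne' this
  obtain ⟨t, hts₁, htm, hμt, hμts⟩ := hat s₁ hs₁ hμ_s₁
  have htw : t ⊆ {x | 0 < w x} := hts₁.trans (Set.inter_subset_right)
  have hνt : 0 < ν t := hpos t htm htw hμt
  have hμd : 0 < μ (s₁ \ t) := by
    rw [pos_iff_ne_zero]
    intro h0
    have : μ s₁ ≤ μ t + μ (s₁ \ t) := by
      have h3 := measure_le_inter_add_diff μ s₁ t
      rwa [Set.inter_eq_self_of_subset_right hts₁] at h3
    rw [h0, add_zero] at this
    exact absurd (lt_of_lt_of_le hμts this) (lt_irrefl _)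
  have hνd : 0 < ν (s₁ \ t) :=
    hpos _ (hs₁.diff htm) (fun x hx => hx.1.2) hμd
  refine ⟨t, hts₁.trans Set.inter_subset_left, htm, hνt, ?_⟩
  have htfin : ν t ≠ ∞ := ((measure_mono (Set.subset_univ t)).trans_lt hfin.lt_top).ne
  calc ν t < ν t + ν (s₁ \ t) := ENNReal.lt_add_right htfin hνd.ne'
    _ = ν s₁ := by
        rw [← measure_union (Set.disjoint_sdiff_right) (hs₁.diff htm),
          Set.union_diff_cancel hts₁]
    _ ≤ ν s := measure_mono Set.inter_subset_left

/-- If the σ-finite measure space `(X, μ)` is atomless and `1 ≤ p < q ≤ ∞`,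
then every bounded linear map `T : L^p(μ) → L^q(μ)` commuting with the
pointwise action of `L^∞(μ)` is zero. -/
theorem stmt6 {X : Type*} [MeasurableSpace X] (μ : Measure X) [SigmaFinite μ]
    (hatomless : ∀ s : Set X, MeasurableSet s → 0 < μ s →
      ∃ t ⊆ s, MeasurableSet t ∧ 0 < μ t ∧ μ t < μ s)
    (p q : ℝ≥0∞) [Fact (1 ≤ p)] [Fact (1 ≤ q)] (hpq : p < q)
    (T : Lp ℂ p μ →L[ℂ] Lp ℂ q μ)
    (hmod : ∀ f : X → ℂ, MemLp f ∞ μ → ∀ g u : Lp ℂ p μ,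
      (u : X → ℂ) =ᵐ[μ] (fun x => f x * (g : X → ℂ) x) →
      (T u : X → ℂ) =ᵐ[μ] fun x => f x * (T g : X → ℂ) x) :
    T = 0 := by
  have hp1 : (1 : ℝ≥0∞) ≤ p := Fact.out
  have hq1 : (1 : ℝ≥0∞) ≤ q := Fact.out
  have hp0 : p ≠ 0 := (lt_of_lt_of_le zero_lt_one hp1).ne'
  have hpt : p ≠ ∞ := (hpq.trans_le le_top).ne
  have hq0 : q ≠ 0 := (lt_of_lt_of_le zero_lt_one hq1).ne'
  set p' : ℝ := p.toReal with hp'def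
  have hp'0 : 0 < p' := ENNReal.toReal_pos hp0 hpt
  refine ContinuousLinearMap.ext fun G => ?_
  rw [ContinuousLinearMap.zero_apply]
  -- measurable representative of G
  obtain ⟨g', hg'meas, hg'ae⟩ : ∃ g' : X → ℂ, StronglyMeasurable g' ∧
      ((G : Lp ℂ p μ) : X → ℂ) =ᵐ[μ] g' :=
    ⟨(Lp.aestronglyMeasurable G).mk _,
      (Lp.aestronglyMeasurable G).stronglyMeasurable_mk,
      (Lp.aestronglyMeasurable G).ae_eq_mk⟩
  set w : X → ℝ≥0∞ := fun x => (‖g' x‖₊ : ℝ≥0∞) ^ p' with hwdef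
  have hw : Measurable w := by
    apply Measurable.pow_const
    exact hg'meas.measurable.nnnorm.coe_nnreal_ennreal
  set ν : Measure X := μ.withDensity w with hνdef
  have happ : ∀ A : Set X, MeasurableSet A → ν A = ∫⁻ x in A, w x ∂μ :=
    fun A hA => withDensity_apply w hA
  have hνfin : ν Set.univ ≠ ∞ := by
    rw [happ Set.univ MeasurableSet.univ, Measure.restrict_univ]
    have hg'Lp : eLpNorm g' p μ < ∞ := by
      rw [← eLpNorm_congr_ae hg'ae]
      exact Lp.eLpNorm_lt_top G
    exact (lintegral_rpow_enorm_lt_top_of_eLpNorm_lt_top hp0 hpt hg'Lp).ne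
  -- the key local estimate
  have K : ∀ s : Set X, MeasurableSet s →
      eLpNorm (s.indicator ((T G : Lp ℂ q μ) : X → ℂ)) q μ ≤
        (‖T‖₊ : ℝ≥0∞) * (ν s) ^ (1 / p') := by
    intro s hs
    set f : X → ℂ := s.indicator (fun _ => 1) with hfdef
    have hf : MemLp f ∞ μ := by
      refine memLp_top_of_bound ?_ 1 (ae_of_all _ fun x => ?_)
      · exact (aestronglyMeasurable_indicator_iff hs).mpr aestronglyMeasurable_const
      · by_cases hx : x ∈ s <;> simp [hfdef, Set.indicator_of_mem,
          Set.indicator_of_notMem, hx]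
    have hind : MemLp (s.indicator ((G : Lp ℂ p μ) : X → ℂ)) p μ :=
      (Lp.memLp G).indicator hs
    set u : Lp ℂ p μ := hind.toLp _ with hudef
    have hu : (u : X → ℂ) =ᵐ[μ] fun x => f x * ((G : Lp ℂ p μ) : X → ℂ) x := by
      filter_upwards [hind.coeFn_toLp] with x hx
      rw [hx]
      by_cases hxs : x ∈ s <;>
        simp [hfdef, Set.indicator_of_mem, Set.indicator_of_notMem, hxs]
    have hTu := hmod f hf G u hu
    have h1 : eLpNorm (s.indicator ((T G : Lp ℂ q μ) : X → ℂ)) q μ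
        = eLpNorm ((T u : Lp ℂ q μ) : X → ℂ) q μ := by
      refine (eLpNorm_congr_ae ?_).symm
      filter_upwards [hTu] with x hx
      rw [hx]
      by_cases hxs : x ∈ s <;>
        simp [hfdef, Set.indicator_of_mem, Set.indicator_of_notMem, hxs]
    have h2 : eLpNorm (s.indicator ((G : Lp ℂ p μ) : X → ℂ)) p μ = (ν s) ^ (1 / p') := by
      have hcongr : (s.indicator ((G : Lp ℂ p μ) : X → ℂ)) =ᵐ[μ] s.indicator g' := by
        filter_upwards [hg'ae] with x hx
        by_cases hxs : x ∈ s <;>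
          simp [Set.indicator_of_mem, Set.indicator_of_notMem, hxs, hx]
      rw [eLpNorm_congr_ae hcongr, eLpNorm_indicator_eq_eLpNorm_restrict hs,
        eLpNorm_eq_lintegral_rpow_enorm_toReal hp0 hpt, happ s hs]
      rfl
    calc eLpNorm (s.indicator ((T G : Lp ℂ q μ) : X → ℂ)) q μ
        = eLpNorm ((T u : Lp ℂ q μ) : X → ℂ) q μ := h1
      _ = (‖T u‖₊ : ℝ≥0∞) := by
          rw [Lp.nnnorm_def, ENNReal.coe_toNNReal (Lp.eLpNorm_ne_top _)]
      _ ≤ (↑(‖T‖₊ * ‖u‖₊) : ℝ≥0∞) := ENNReal.coe_le_coe.mpr (T.le_opNNNorm u)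
      _ = (‖T‖₊ : ℝ≥0∞) * (‖u‖₊ : ℝ≥0∞) := by rw [ENNReal.coe_mul]
      _ = (‖T‖₊ : ℝ≥0∞) * eLpNorm (s.indicator ((G : Lp ℂ p μ) : X → ℂ)) p μ := by
          rw [hudef, Lp.nnnorm_toLp, ENNReal.coe_toNNReal hind.2.ne]
      _ = (‖T‖₊ : ℝ≥0∞) * (ν s) ^ (1 / p') := by rw [h2]
  -- atomless and small-subset properties of ν
  have hνat := aux_withDensity_atomless μ hatomless w hw hνfin
  have hsmall := aux_small ν hνfin hνat
  -- it suffices to show the eLpNorm vanishes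
  suffices hz : eLpNorm ((T G : Lp ℂ q μ) : X → ℂ) q μ = 0 by
    have hn : ‖T G‖ = 0 := by rw [Lp.norm_def, hz, ENNReal.toReal_zero]
    exact norm_eq_zero.mp hn
  rcases eq_or_ne q ∞ with hqt | hqt
  · -- case q = ∞
    subst hqt
    refine aux_zero (c := (‖T‖₊ : ℝ≥0∞)) ENNReal.coe_ne_top
      (r := 1 / p') (by positivity) ?_
    intro ε hε0 hεt
    obtain ⟨t, htm, -, hdisj, htle, hR0⟩ :=
      aux_partition ν hνfin hsmall Set.univ MeasurableSet.univ ε hε0 hεt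
    set R : Set X := Set.univ \ ⋃ k, t k with hRdef
    have hRm : MeasurableSet R := MeasurableSet.univ.diff (MeasurableSet.iUnion htm)
    set b : ℝ≥0∞ := (‖T‖₊ : ℝ≥0∞) * ε ^ (1 / p') with hbdef
    have hk_bound : ∀ k, eLpNorm ((t k).indicator ((T G : Lp ℂ ∞ μ) : X → ℂ)) ∞ μ ≤ b := by
      intro k
      refine (K (t k) (htm k)).trans ?_
      rw [hbdef]
      gcongr
      exact htle k
    have hR_bound : eLpNorm (R.indicator ((T G : Lp ℂ ∞ μ) : X → ℂ)) ∞ μ = 0 := by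
      refine le_antisymm ?_ (zero_le)
      refine (K R hRm).trans ?_
      rw [hR0, ENNReal.zero_rpow_of_pos (by positivity), mul_zero]
    have hae_k : ∀ k, ∀ᵐ x ∂μ,
        (‖(t k).indicator ((T G : Lp ℂ ∞ μ) : X → ℂ) x‖₊ : ℝ≥0∞) ≤ b := by
      intro k
      filter_upwards [ae_le_eLpNormEssSup
        (f := (t k).indicator ((T G : Lp ℂ ∞ μ) : X → ℂ)) (μ := μ)] with x hx
      refine hx.trans ?_
      rw [← eLpNorm_exponent_top]
      exact hk_bound k
    have hae_R : ∀ᵐ x ∂μ,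
        (‖R.indicator ((T G : Lp ℂ ∞ μ) : X → ℂ) x‖₊ : ℝ≥0∞) = 0 := by
      filter_upwards [ae_le_eLpNormEssSup
        (f := R.indicator ((T G : Lp ℂ ∞ μ) : X → ℂ)) (μ := μ)] with x hx
      refine le_antisymm (hx.trans ?_) (zero_le)
      rw [← eLpNorm_exponent_top, hR_bound]
    have hfinal : ∀ᵐ x ∂μ, (‖((T G : Lp ℂ ∞ μ) : X → ℂ) x‖₊ : ℝ≥0∞) ≤ b := by
      filter_upwards [ae_all_iff.mpr hae_k, hae_R] with x h1 h2
      by_cases hx : ∃ k, x ∈ t k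
      · obtain ⟨k, hk⟩ := hx
        have := h1 k
        rwa [Set.indicator_of_mem hk] at this
      · have hxR : x ∈ R := ⟨trivial, fun hmem => hx (Set.mem_iUnion.mp hmem)⟩
        rw [Set.indicator_of_mem hxR] at h2
        rw [h2]
        exact zero_le
    rw [eLpNorm_exponent_top]
    exact essSup_le_of_ae_le b hfinal
  · -- case q < ∞
    set q' : ℝ := q.toReal with hq'def
    have hq'0 : 0 < q' := ENNReal.toReal_pos hq0 hqt
    have hpq' : p' < q' := ENNReal.toReal_lt_toReal hpt hqt |>.mpr hpq
    have hκ : 0 < q' / p' - 1 := by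
      rw [sub_pos, lt_div_iff₀ hp'0, one_mul]
      exact hpq'
    set κ : ℝ := q' / p' - 1 with hκdef
    -- the σ-additive decomposition bound
    have claim : ∀ ε : ℝ≥0∞, 0 < ε → ε ≠ ∞ →
        eLpNorm ((T G : Lp ℂ q μ) : X → ℂ) q μ ^ q' ≤
          ((‖T‖₊ : ℝ≥0∞) ^ q' * ν Set.univ) * ε ^ κ := by
      intro ε hε0 hεt
      obtain ⟨t, htm, -, hdisj, htle, hR0⟩ :=
        aux_partition ν hνfin hsmall Set.univ MeasurableSet.univ ε hε0 hεt
      set R : Set X := Set.univ \ ⋃ k, t k with hRdef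
      have hRm : MeasurableSet R := MeasurableSet.univ.diff (MeasurableSet.iUnion htm)
      set h : X → ℂ := ((T G : Lp ℂ q μ) : X → ℂ) with hhdef
      -- identity for indicators
      have hid : ∀ s : Set X, MeasurableSet s →
          ∫⁻ x in s, (‖h x‖₊ : ℝ≥0∞) ^ q' ∂μ = eLpNorm (s.indicator h) q μ ^ q' := by
        intro s hs
        rw [eLpNorm_indicator_eq_eLpNorm_restrict hs,
          eLpNorm_eq_lintegral_rpow_enorm_toReal hq0 hqt, ← ENNReal.rpow_mul, one_div,
          inv_mul_cancel₀ hq'0.ne', ENNReal.rpow_one]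
        rfl
      have hbound : ∀ s : Set X, MeasurableSet s →
          ∫⁻ x in s, (‖h x‖₊ : ℝ≥0∞) ^ q' ∂μ ≤
            (‖T‖₊ : ℝ≥0∞) ^ q' * (ν s) ^ (q' / p') := by
        intro s hs
        rw [hid s hs]
        calc eLpNorm (s.indicator h) q μ ^ q'
            ≤ ((‖T‖₊ : ℝ≥0∞) * (ν s) ^ (1 / p')) ^ q' := by
              gcongr
              exact K s hs
          _ = (‖T‖₊ : ℝ≥0∞) ^ q' * ((ν s) ^ (1 / p')) ^ q' :=
              ENNReal.mul_rpow_of_nonneg _ _ hq'0.le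
          _ = (‖T‖₊ : ℝ≥0∞) ^ q' * (ν s) ^ (q' / p') := by
              rw [← ENNReal.rpow_mul, one_div, inv_mul_eq_div]
      have hmain : eLpNorm h q μ ^ q' = ∫⁻ x, (‖h x‖₊ : ℝ≥0∞) ^ q' ∂μ := by
        rw [eLpNorm_eq_lintegral_rpow_enorm_toReal hq0 hqt, ← ENNReal.rpow_mul, one_div,
          inv_mul_cancel₀ hq'0.ne', ENNReal.rpow_one]
        rfl
      rw [hmain]
      have hsplit : ∫⁻ x, (‖h x‖₊ : ℝ≥0∞) ^ q' ∂μ =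
          (∫⁻ x in ⋃ k, t k, (‖h x‖₊ : ℝ≥0∞) ^ q' ∂μ) +
            ∫⁻ x in R, (‖h x‖₊ : ℝ≥0∞) ^ q' ∂μ := by
        rw [← lintegral_union hRm (Set.disjoint_sdiff_right),
          Set.union_diff_cancel (Set.subset_univ _), Measure.restrict_univ]
      rw [hsplit]
      have hRzero : ∫⁻ x in R, (‖h x‖₊ : ℝ≥0∞) ^ q' ∂μ = 0 := by
        refine le_antisymm ?_ (zero_le)
        calc ∫⁻ x in R, (‖h x‖₊ : ℝ≥0∞) ^ q' ∂μ
            ≤ (‖T‖₊ : ℝ≥0∞) ^ q' * (ν R) ^ (q' / p') := hbound R hRm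
          _ = 0 := by
              rw [hR0, ENNReal.zero_rpow_of_pos (by positivity), mul_zero]
      rw [hRzero, add_zero, lintegral_iUnion htm hdisj]
      calc ∑' k, ∫⁻ x in t k, (‖h x‖₊ : ℝ≥0∞) ^ q' ∂μ
          ≤ ∑' k, (‖T‖₊ : ℝ≥0∞) ^ q' * ((ν (t k)) ^ κ * ν (t k)) := by
            refine ENNReal.tsum_le_tsum fun k => ?_
            refine (hbound (t k) (htm k)).trans ?_
            gcongr
            have hqp : q' / p' = κ + 1 := by rw [hκdef]; ring
            rw [hqp, ENNReal.rpow_add_of_nonneg _ _ hκ.le zero_le_one, ENNReal.rpow_one]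
        _ ≤ ∑' k, (‖T‖₊ : ℝ≥0∞) ^ q' * (ε ^ κ * ν (t k)) := by
            refine ENNReal.tsum_le_tsum fun k => ?_
            gcongr <;> first
              | exact htle k
              | exact hκ.le
        _ = ((‖T‖₊ : ℝ≥0∞) ^ q' * ε ^ κ) * ∑' k, ν (t k) := by
            simp_rw [← mul_assoc]
            exact ENNReal.tsum_mul_left
        _ ≤ ((‖T‖₊ : ℝ≥0∞) ^ q' * ε ^ κ) * ν Set.univ := by
            gcongr
            rw [← measure_iUnion hdisj htm]
            exact measure_mono (Set.subset_univ _)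
        _ = ((‖T‖₊ : ℝ≥0∞) ^ q' * ν Set.univ) * ε ^ κ := by ring
    have hcfin : (‖T‖₊ : ℝ≥0∞) ^ q' * ν Set.univ ≠ ∞ := by
      apply ENNReal.mul_ne_top _ hνfin
      exact (ENNReal.rpow_lt_top_of_nonneg hq'0.le ENNReal.coe_ne_top).ne
    have h0 := aux_zero hcfin hκ claim
    rwa [ENNReal.rpow_eq_zero_iff_of_pos hq'0] at h0
end

section
/- Let (X, Σ, μ) be a σ-finite measure space and 1 ≤ p < ∞. Let V be a closed linear subspace of L^p(μ) such that f·g ∈ V whenever f ∈ L^∞(μ) and g ∈ V. Then there is a measurable set E ⊆ X such that V = {g ∈ L^p(μ) : g = 0 almost everywhere on the complement of E}. -/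
open MeasureTheory Filter Topology ENNReal

lemma stmt7_dct {X : Type*} [MeasurableSpace X] {μ : Measure X} {p : ℝ≥0∞}
    [Fact (1 ≤ p)] (hp' : p ≠ ∞) (u : Lp ℂ p μ) {A : ℕ → Set X}
    (hA : ∀ n, MeasurableSet (A n))
    (hconv : ∀ᵐ x ∂μ, (u : X → ℂ) x ≠ 0 → ∀ᶠ n in atTop, x ∈ A n) :
    Tendsto (fun n => ((Lp.memLp u).indicator (hA n)).toLp ((A n).indicator (u : X → ℂ)))
      atTop (𝓝 u) := by
  have hp1 : (1 : ℝ≥0∞) ≤ p := Fact.out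
  have hp0 : p ≠ 0 := (lt_of_lt_of_le zero_lt_one hp1).ne'
  have hpt : 0 < p.toReal := ENNReal.toReal_pos hp0 hp'
  have hum : Measurable (u : X → ℂ) := (Lp.stronglyMeasurable u).measurable
  set F : ℕ → X → ℝ≥0∞ :=
    fun n x => (‖(A n).indicator (u : X → ℂ) x - (u : X → ℂ) x‖₊ : ℝ≥0∞) ^ p.toReal with hF
  have hFmeas : ∀ n, Measurable (F n) := fun n =>
    (((hum.indicator (hA n)).sub hum).nnnorm.coe_nnreal_ennreal).pow_const _
  set bound : X → ℝ≥0∞ :=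
    fun x => (2 : ℝ≥0∞) ^ p.toReal * (‖(u : X → ℂ) x‖₊ : ℝ≥0∞) ^ p.toReal with hb
  have h_bound : ∀ n, ∀ᵐ x ∂μ, F n x ≤ bound x := by
    intro n
    refine Eventually.of_forall fun x => ?_
    have h1 : (‖(A n).indicator (u : X → ℂ) x - (u : X → ℂ) x‖₊ : ℝ≥0∞)
        ≤ 2 * (‖(u : X → ℂ) x‖₊ : ℝ≥0∞) := by
      have hind : ‖(A n).indicator (u : X → ℂ) x‖₊ ≤ ‖(u : X → ℂ) x‖₊ := by
        by_cases hxA : x ∈ A n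
        · rw [Set.indicator_of_mem hxA]
        · rw [Set.indicator_of_notMem hxA]; simp
      calc (‖(A n).indicator (u : X → ℂ) x - (u : X → ℂ) x‖₊ : ℝ≥0∞)
          ≤ (‖(A n).indicator (u : X → ℂ) x‖₊ : ℝ≥0∞) + (‖(u : X → ℂ) x‖₊ : ℝ≥0∞) := by
            exact_mod_cast nnnorm_sub_le _ _
        _ ≤ (‖(u : X → ℂ) x‖₊ : ℝ≥0∞) + (‖(u : X → ℂ) x‖₊ : ℝ≥0∞) := by
            exact add_le_add_left (by exact_mod_cast hind) _
        _ = 2 * (‖(u : X → ℂ) x‖₊ : ℝ≥0∞) := (two_mul _).symm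
    calc F n x ≤ (2 * (‖(u : X → ℂ) x‖₊ : ℝ≥0∞)) ^ p.toReal :=
          ENNReal.rpow_le_rpow h1 hpt.le
      _ = bound x := by rw [ENNReal.mul_rpow_of_nonneg _ _ hpt.le]
  have h_fin : ∫⁻ x, bound x ∂μ ≠ ∞ := by
    rw [hb, lintegral_const_mul _ (hum.nnnorm.coe_nnreal_ennreal.pow_const _)]
    exact ENNReal.mul_ne_top (ENNReal.rpow_ne_top_of_nonneg hpt.le (by norm_num))
      (lintegral_rpow_enorm_lt_top_of_eLpNorm_lt_top hp0 hp' (Lp.eLpNorm_lt_top u)).ne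
  have h_lim : ∀ᵐ x ∂μ, Tendsto (fun n => F n x) atTop (𝓝 0) := by
    filter_upwards [hconv] with x hx
    refine tendsto_const_nhds.congr' ?_
    by_cases hux : (u : X → ℂ) x = 0
    · refine Eventually.of_forall fun n => ?_
      have hind0 : (A n).indicator (u : X → ℂ) x = 0 := by
        by_cases hxA : x ∈ A n
        · rw [Set.indicator_of_mem hxA, hux]
        · exact Set.indicator_of_notMem hxA _
      simp [hF, hind0, hux, ENNReal.zero_rpow_of_pos hpt]
    · filter_upwards [hx hux] with n hn
      simp [hF, Set.indicator_of_mem hn, ENNReal.zero_rpow_of_pos hpt]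
  have hDCT := tendsto_lintegral_of_dominated_convergence bound hFmeas h_bound h_fin h_lim
  rw [lintegral_zero] at hDCT
  have hsnorm : Tendsto (fun n =>
      eLpNorm ((A n).indicator (u : X → ℂ) - (u : X → ℂ)) p μ) atTop (𝓝 0) := by
    have hcont : ContinuousAt (fun z : ℝ≥0∞ => z ^ (1 / p.toReal)) 0 :=
      ENNReal.continuous_rpow_const.continuousAt
    have h0 : (0 : ℝ≥0∞) ^ (1 / p.toReal) = 0 :=
      ENNReal.zero_rpow_of_pos (by positivity)
    have h2 := hcont.tendsto.comp hDCT
    rw [h0] at h2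
    refine h2.congr fun n => ?_
    rw [eLpNorm_eq_lintegral_rpow_enorm_toReal hp0 hp']
    rfl
  rw [tendsto_iff_dist_tendsto_zero]
  have hdist : ∀ n, dist (((Lp.memLp u).indicator (hA n)).toLp ((A n).indicator (u : X → ℂ))) u
      = (eLpNorm ((A n).indicator (u : X → ℂ) - (u : X → ℂ)) p μ).toReal := by
    intro n
    rw [Lp.dist_def]
    congr 1
    exact eLpNorm_congr_ae
      ((MemLp.coeFn_toLp (f := (A n).indicator (u : X → ℂ)) ((Lp.memLp u).indicator (hA n))).sub EventuallyEq.rfl)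
  simp only [hdist]
  exact (ENNReal.tendsto_toReal (by norm_num)).comp hsnorm

/-- Every closed subspace of `L^p(μ)` (`1 ≤ p < ∞`, σ-finite `μ`) invariant
under pointwise multiplication by `L^∞(μ)` is of the form
`{g : g = 0 a.e. on Eᶜ}` for some measurable set `E`. -/
theorem stmt7 {X : Type*} [MeasurableSpace X] (μ : Measure X) [SigmaFinite μ]
    (p : ℝ≥0∞) [Fact (1 ≤ p)] (hp' : p ≠ ∞)
    (V : Submodule ℂ (Lp ℂ p μ)) (hclosed : IsClosed (V : Set (Lp ℂ p μ)))
    (hinv : ∀ f : X → ℂ, MemLp f ∞ μ → ∀ g ∈ V, ∀ u : Lp ℂ p μ,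
      (u : X → ℂ) =ᵐ[μ] (fun x => f x * (g : X → ℂ) x) → u ∈ V) :
    ∃ E : Set X, MeasurableSet E ∧
      ∀ u : Lp ℂ p μ, u ∈ V ↔ ∀ᵐ x ∂μ, x ∉ E → (u : X → ℂ) x = 0 := by
  classical
  set ν := μ.toFinite with hνdef
  have hνμ : ν ≪ μ := toFinite_absolutelyContinuous μ
  have hμν : μ ≪ ν := absolutelyContinuous_toFinite μ
  have hmeasf : ∀ g : Lp ℂ p μ, Measurable (g : X → ℂ) :=
    fun g => (Lp.stronglyMeasurable g).measurable
  set S : Lp ℂ p μ → Set X := fun g => {x | (g : X → ℂ) x ≠ 0} with hSdef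
  have hSmeas : ∀ g, MeasurableSet (S g) := by
    intro g
    have : S g = (g : X → ℂ) ⁻¹' ({0}ᶜ) := rfl
    rw [this]
    exact hmeasf g (measurableSet_singleton 0).compl
  -- multiplication by bounded measurable functions preserves V
  have hmulV : ∀ g : Lp ℂ p μ, g ∈ V → ∀ (f : X → ℂ) (C : ℝ), Measurable f →
      (∀ x, ‖f x‖ ≤ C) → ∀ (w : X → ℂ) (hw : MemLp w p μ),
      (∀ x, w x = f x * (g : X → ℂ) x) → hw.toLp w ∈ V := by
    intro g hg f C hfm hfb w hw hwe
    refine hinv f (memLp_top_of_bound hfm.aestronglyMeasurable C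
      (Eventually.of_forall hfb)) g hg _ ?_
    exact hw.coeFn_toLp.trans (Eventually.of_forall fun x => hwe x)
  -- indicator of measurable set times element of V is in V
  have hind : ∀ g : Lp ℂ p μ, g ∈ V → ∀ (A : Set X) (hA : MeasurableSet A),
      ((Lp.memLp g).indicator hA).toLp (A.indicator (g : X → ℂ)) ∈ V := by
    intro g hg A hA
    refine hmulV g hg (A.indicator fun _ => (1 : ℂ)) 1
      ((measurable_const (a := (1:ℂ))).indicator hA) ?_ _ _ ?_
    · intro x
      by_cases hx : x ∈ A <;> simp [Set.indicator_of_mem, Set.indicator_of_notMem, hx]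
    · intro x
      by_cases hx : x ∈ A <;>
        simp [Set.indicator_of_mem, Set.indicator_of_notMem, hx]
  -- B1 : any Lp function a.e. supported inside the support of an element of V is in V
  have hB1 : ∀ g : Lp ℂ p μ, g ∈ V → ∀ u : Lp ℂ p μ,
      (∀ᵐ x ∂μ, (u : X → ℂ) x ≠ 0 → (g : X → ℂ) x ≠ 0) → u ∈ V := by
    intro g hg u hsupp
    set A : ℕ → Set X := fun k =>
      {x | (g : X → ℂ) x ≠ 0 ∧ ‖(u : X → ℂ) x‖ ≤ k * ‖(g : X → ℂ) x‖} with hAdef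
    have hAmeas : ∀ k, MeasurableSet (A k) := by
      intro k
      refine MeasurableSet.inter ?_ ?_
      · exact hmeasf g (measurableSet_singleton 0).compl
      · exact measurableSet_le (hmeasf u).norm (measurable_const.mul (hmeasf g).norm)
    set f : ℕ → X → ℂ := fun k x =>
      if x ∈ A k then (u : X → ℂ) x / (g : X → ℂ) x else 0 with hfdef
    have hfmeas : ∀ k, Measurable (f k) := fun k =>
      Measurable.ite (hAmeas k) ((hmeasf u).div (hmeasf g)) measurable_const
    have hfb : ∀ k, ∀ x, ‖f k x‖ ≤ (k : ℝ) := by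
      intro k x
      by_cases hx : x ∈ A k
      · rw [hfdef]
        simp only [if_pos hx]
        obtain ⟨hg0, hub⟩ := hx
        have hgpos : 0 < ‖(g : X → ℂ) x‖ := norm_pos_iff.mpr hg0
        rw [norm_div, div_le_iff₀ hgpos]
        exact hub
      · rw [hfdef]
        simp only [if_neg hx, norm_zero]
        positivity
    have hwmem : ∀ k, MemLp ((A k).indicator (u : X → ℂ)) p μ :=
      fun k => (Lp.memLp u).indicator (hAmeas k)
    have hukV : ∀ k, ((Lp.memLp u).indicator (hAmeas k)).toLp
        ((A k).indicator (u : X → ℂ)) ∈ V := by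
      intro k
      refine hmulV g hg (f k) k (hfmeas k) (hfb k) _ _ ?_
      intro x
      by_cases hx : x ∈ A k
      · rw [Set.indicator_of_mem hx, hfdef]
        simp only [if_pos hx]
        exact (div_mul_cancel₀ _ hx.1).symm
      · rw [Set.indicator_of_notMem hx, hfdef]
        simp only [if_neg hx, zero_mul]
    have hconv : ∀ᵐ x ∂μ, (u : X → ℂ) x ≠ 0 → ∀ᶠ k in atTop, x ∈ A k := by
      filter_upwards [hsupp] with x hx hux
      have hg0 := hx hux
      have hgpos : 0 < ‖(g : X → ℂ) x‖ := norm_pos_iff.mpr hg0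
      refine eventually_atTop.mpr ⟨⌈‖(u : X → ℂ) x‖ / ‖(g : X → ℂ) x‖⌉₊, fun k hk => ?_⟩
      refine ⟨hg0, ?_⟩
      rw [← div_le_iff₀ hgpos]
      calc ‖(u : X → ℂ) x‖ / ‖(g : X → ℂ) x‖
          ≤ (⌈‖(u : X → ℂ) x‖ / ‖(g : X → ℂ) x‖⌉₊ : ℝ) := Nat.le_ceil _
        _ ≤ (k : ℝ) := by exact_mod_cast hk
    have htend := stmt7_dct hp' u hAmeas hconv
    exact hclosed.mem_of_tendsto htend (Eventually.of_forall hukV)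
  -- finite unions of supports
  have hBfin : ∀ (gs : ℕ → Lp ℂ p μ), (∀ n, gs n ∈ V) → ∀ N : ℕ, ∀ u : Lp ℂ p μ,
      (∀ᵐ x ∂μ, (u : X → ℂ) x ≠ 0 → ∃ n < N, (gs n : X → ℂ) x ≠ 0) → u ∈ V := by
    intro gs hgs N
    induction N with
    | zero =>
      intro u hu
      have : u = 0 := by
        refine Lp.ext ?_
        filter_upwards [hu, Lp.coeFn_zero ℂ p μ] with x hx h0
        rw [h0]
        by_contra hne
        obtain ⟨n, hn, -⟩ := hx hne
        exact absurd hn (Nat.not_lt_zero n)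
      rw [this]; exact V.zero_mem
    | succ N ih =>
      intro u hu
      set T : Set X := S (gs N) with hTdef
      have hTmeas : MeasurableSet T := hSmeas (gs N)
      set a := ((Lp.memLp u).indicator hTmeas).toLp (T.indicator (u : X → ℂ)) with ha
      set b := ((Lp.memLp u).indicator hTmeas.compl).toLp (Tᶜ.indicator (u : X → ℂ)) with hb
      have haV : a ∈ V := by
        refine hB1 (gs N) (hgs N) a ?_
        filter_upwards [MemLp.coeFn_toLp (f := T.indicator (u : X → ℂ)) ((Lp.memLp u).indicator hTmeas)] with x hx hax
        rw [hx] at hax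
        by_contra hg0
        have hg0' : (gs N : X → ℂ) x = 0 := hg0
        have hxT : x ∉ T := fun h => h hg0'
        exact hax (Set.indicator_of_notMem hxT _)
      have hbV : b ∈ V := by
        refine ih b ?_
        filter_upwards [MemLp.coeFn_toLp (f := Tᶜ.indicator (u : X → ℂ)) ((Lp.memLp u).indicator hTmeas.compl), hu]
          with x hx hbx hbne
        rw [hx] at hbne
        by_cases hxT : x ∈ T
        · exact absurd (Set.indicator_of_notMem (by simpa using hxT) (u : X → ℂ)) hbne
        · have hux : (u : X → ℂ) x ≠ 0 := by
            rwa [Set.indicator_of_mem (by simpa using hxT)] at hbne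
          obtain ⟨n, hn, hgn⟩ := hbx hux
          rcases Nat.lt_succ_iff_lt_or_eq.mp hn with h | h
          · exact ⟨n, h, hgn⟩
          · exact absurd (h ▸ hgn) (by simpa [hTdef, hSdef] using hxT)
      have huab : u = a + b := by
        refine Lp.ext ?_
        filter_upwards [Lp.coeFn_add a b,
          MemLp.coeFn_toLp (f := T.indicator (u : X → ℂ)) ((Lp.memLp u).indicator hTmeas),
          MemLp.coeFn_toLp (f := Tᶜ.indicator (u : X → ℂ)) ((Lp.memLp u).indicator hTmeas.compl)] with x hx hax hbx
        rw [hx]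
        simp only [Pi.add_apply, ha, hb] at *
        rw [hax, hbx]
        by_cases hxT : x ∈ T
        · rw [Set.indicator_of_mem hxT, Set.indicator_of_notMem (by simpa using hxT)]
          ring
        · rw [Set.indicator_of_notMem hxT, Set.indicator_of_mem (by simpa using hxT)]
          ring
      rw [huab]
      exact V.add_mem haV hbV
  -- the supremum of measures of supports
  set M : ℝ≥0∞ := ⨆ g : V, ν (S (g : Lp ℂ p μ)) with hMdef
  have hMtop : M ≠ ∞ := by
    refine ne_top_of_le_ne_top (measure_ne_top ν Set.univ) ?_
    exact iSup_le fun g => measure_mono (Set.subset_univ _)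
  -- choose an approximating sequence
  have hgs : ∀ n : ℕ, ∃ g : Lp ℂ p μ, g ∈ V ∧ M ≤ ν (S g) + ((n : ℝ≥0∞) + 1)⁻¹ := by
    intro n
    by_cases hM0 : M = 0
    · exact ⟨0, V.zero_mem, by rw [hM0]; exact zero_le⟩
    · have hlt : M - ((n : ℝ≥0∞) + 1)⁻¹ < M :=
        ENNReal.sub_lt_self hMtop hM0 (by simp)
      rw [hMdef] at hlt
      obtain ⟨⟨g, hgV⟩, hgl⟩ := lt_iSup_iff.mp hlt
      refine ⟨g, hgV, ?_⟩
      calc M ≤ M - ((n : ℝ≥0∞) + 1)⁻¹ + ((n : ℝ≥0∞) + 1)⁻¹ := le_tsub_add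
        _ ≤ ν (S g) + ((n : ℝ≥0∞) + 1)⁻¹ := add_le_add_left hgl.le _
  choose gs hgsV hgsM using hgs
  -- the candidate set E
  refine ⟨⋃ n, S (gs n), MeasurableSet.iUnion fun n => hSmeas _, fun u => ?_⟩
  set E : Set X := ⋃ n, S (gs n) with hEdef
  constructor
  · -- forward: u ∈ V vanishes a.e. outside E
    intro huV
    -- key: ν (S u \ S (gs n)) ≤ 1/(n+1)
    have hkey : ∀ n : ℕ, ν (S u \ S (gs n)) ≤ ((n : ℝ≥0∞) + 1)⁻¹ := by
      intro n
      set w := gs n + ((Lp.memLp u).indicator (hSmeas (gs n)).compl).toLp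
        ((S (gs n))ᶜ.indicator (u : X → ℂ)) with hw
      have hwV : w ∈ V := V.add_mem (hgsV n) (hind u huV _ (hSmeas (gs n)).compl)
      have hsub : (S u ∪ S (gs n) : Set X) ≤ᵐ[ν] S w := by
        refine hνμ.ae_le ?_
        filter_upwards [Lp.coeFn_add (gs n)
            (((Lp.memLp u).indicator (hSmeas (gs n)).compl).toLp
              ((S (gs n))ᶜ.indicator (u : X → ℂ))),
          MemLp.coeFn_toLp (f := (S (gs n))ᶜ.indicator (u : X → ℂ)) ((Lp.memLp u).indicator (hSmeas (gs n)).compl)]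
          with x hx1 hx2 hxU
        have hwx : (w : X → ℂ) x = (gs n : X → ℂ) x + (S (gs n))ᶜ.indicator (u : X → ℂ) x := by
          rw [hw, hx1]
          simp [hx2]
        by_cases hxg : x ∈ S (gs n)
        · have : (S (gs n))ᶜ.indicator (u : X → ℂ) x = 0 :=
            Set.indicator_of_notMem (by simpa using hxg) _
          show (w : X → ℂ) x ≠ 0
          rw [hwx, this, add_zero]
          exact hxg
        · have hxu : x ∈ S u := hxU.resolve_right hxg
          have : (S (gs n))ᶜ.indicator (u : X → ℂ) x = (u : X → ℂ) x :=
            Set.indicator_of_mem (by simpa using hxg) _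
          show (w : X → ℂ) x ≠ 0
          rw [hwx, this]
          have hg0 : (gs n : X → ℂ) x = 0 := by
            by_contra hne
            exact hxg hne
          rw [hg0, zero_add]
          exact hxu
      have hle : ν (S u ∪ S (gs n)) ≤ M := by
        refine le_trans (measure_mono_ae hsub) ?_
        exact le_iSup (fun g : V => ν (S (g : Lp ℂ p μ))) ⟨w, hwV⟩
      have hdisj : ν (S u \ S (gs n)) + ν (S (gs n)) = ν (S u ∪ S (gs n)) := by
        rw [← measure_union (disjoint_sdiff_self_left) (hSmeas (gs n))]
        congr 1
        exact Set.diff_union_self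
      have h2 : ν (S u \ S (gs n)) + ν (S (gs n)) ≤ ν (S (gs n)) + ((n : ℝ≥0∞) + 1)⁻¹ :=
        hdisj ▸ (hle.trans (hgsM n))
      rw [add_comm (ν (S (gs n)))] at h2
      exact (ENNReal.add_le_add_iff_right (measure_ne_top ν _)).mp h2
    have hzero : ν (S u \ E) = 0 := by
      by_contra hne
      obtain ⟨n, hn⟩ := ENNReal.exists_inv_nat_lt hne
      have h1 : ν (S u \ E) ≤ ((n : ℝ≥0∞) + 1)⁻¹ :=
        le_trans (measure_mono (Set.diff_subset_diff_right (Set.subset_iUnion _ n))) (hkey n)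
      have h2 : ((n : ℝ≥0∞) + 1)⁻¹ ≤ ((n : ℝ≥0∞))⁻¹ :=
        ENNReal.inv_le_inv.mpr (le_add_of_nonneg_right zero_le_one)
      exact absurd (h1.trans h2) (not_le.mpr hn)
    have hμzero : μ (S u \ E) = 0 := hμν hzero
    rw [ae_iff]
    refine measure_mono_null ?_ hμzero
    intro x hx
    simp only [Set.mem_setOf_eq] at hx
    push_neg at hx
    exact ⟨hx.2, hx.1⟩
  · -- backward: anything supported in E is in V
    intro hu
    set A : ℕ → Set X := fun N => ⋃ n, ⋃ (_ : n < N), S (gs n) with hAdef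
    have hAmeas : ∀ N, MeasurableSet (A N) :=
      fun N => MeasurableSet.iUnion fun n => MeasurableSet.iUnion fun _ => hSmeas _
    have hconv : ∀ᵐ x ∂μ, (u : X → ℂ) x ≠ 0 → ∀ᶠ N in atTop, x ∈ A N := by
      filter_upwards [hu] with x hx hux
      have hxE : x ∈ E := by
        by_contra hxE
        exact hux (hx hxE)
      obtain ⟨n, hn⟩ := Set.mem_iUnion.mp hxE
      refine eventually_atTop.mpr ⟨n + 1, fun N hN => ?_⟩
      exact Set.mem_iUnion.mpr ⟨n, Set.mem_iUnion.mpr ⟨lt_of_lt_of_le (Nat.lt_succ_self n) hN, hn⟩⟩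
    have htend := stmt7_dct hp' u hAmeas hconv
    refine hclosed.mem_of_tendsto htend (Eventually.of_forall fun N => ?_)
    refine hBfin gs hgsV N _ ?_
    filter_upwards [MemLp.coeFn_toLp (f := (A N).indicator (u : X → ℂ)) ((Lp.memLp u).indicator (hAmeas N))] with x hx hne
    rw [hx] at hne
    have hxA : x ∈ A N := by
      by_contra hxA
      exact hne (Set.indicator_of_notMem hxA _)
    obtain ⟨n, hn⟩ := Set.mem_iUnion.mp hxA
    obtain ⟨hnN, hxS⟩ := Set.mem_iUnion.mp hn
    exact ⟨n, hnN, hxS⟩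
end

section
/- Let (X, Σ, μ) be a σ-finite measure space and 1 ≤ p < ∞. Let T : L^p(μ) → L^p(μ) be a bounded linear idempotent (T ∘ T = T) satisfying T(f·g) = f·T(g) for all f ∈ L^∞(μ) and g ∈ L^p(μ). Then there is a measurable set E ⊆ X such that T(g) = 1_E·g for all g ∈ L^p(μ); in particular ‖g‖_p^p = ‖T g‖_p^p + ‖g − T g‖_p^p for every g ∈ L^p(μ). -/
open MeasureTheory Filter Topology ENNReal

/-- Every bounded idempotent on `L^p(μ)` (`1 ≤ p < ∞`, σ-finite `μ`) commuting
with the pointwise action of `L^∞(μ)` is multiplication by an indicator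
function `1_E`; in particular it is an `L^p`-projection:
`‖g‖^p = ‖Tg‖^p + ‖g - Tg‖^p`. -/
theorem stmt8 {X : Type*} [MeasurableSpace X] (μ : Measure X) [SigmaFinite μ]
    (p : ℝ≥0∞) [Fact (1 ≤ p)] (hp' : p ≠ ∞)
    (T : Lp ℂ p μ →L[ℂ] Lp ℂ p μ)
    (hidem : ∀ g : Lp ℂ p μ, T (T g) = T g)
    (hmod : ∀ f : X → ℂ, MemLp f ∞ μ → ∀ g u : Lp ℂ p μ,
      (u : X → ℂ) =ᵐ[μ] (fun x => f x * (g : X → ℂ) x) →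
      (T u : X → ℂ) =ᵐ[μ] fun x => f x * (T g : X → ℂ) x) :
    ∃ E : Set X, MeasurableSet E ∧
      (∀ g : Lp ℂ p μ, (T g : X → ℂ) =ᵐ[μ] E.indicator (g : X → ℂ)) ∧
      ∀ g : Lp ℂ p μ,
        ‖g‖ ^ p.toReal = ‖T g‖ ^ p.toReal + ‖g - T g‖ ^ p.toReal := by
  classical
  have hp1 : (1 : ℝ≥0∞) ≤ p := Fact.out
  have hp0 : p ≠ 0 := by intro h; simp [h] at hp1
  set q := p.toReal with hq_def
  have hq_pos : 0 < q := ENNReal.toReal_pos hp0 hp'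
  set s : ℕ → Set X := spanningSets μ with hs_def
  have hs : ∀ n, MeasurableSet (s n) := measurableSet_spanningSets μ
  have hμs : ∀ n, μ (s n) ≠ ∞ := fun n => (measure_spanningSets_lt_top μ n).ne
  set χ : ℕ → Lp ℂ p μ := fun n => indicatorConstLp p (hs n) (hμs n) (1 : ℂ) with hχ_def
  set W : ℕ → X → ℂ := fun n => (T (χ n) : X → ℂ) with hW_def
  have hχcoe : ∀ n, (χ n : X → ℂ) =ᵐ[μ] (s n).indicator fun _ => (1 : ℂ) :=
    fun n => indicatorConstLp_coeFn
  have hWmeas : ∀ n, StronglyMeasurable (W n) := fun n => Lp.stronglyMeasurable _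
  -- bounded indicators are in L^∞
  have hmemtop : ∀ (B : Set X), MeasurableSet B → ∀ (f : X → ℂ) (C : ℝ),
      StronglyMeasurable f → (∀ x ∈ B, ‖f x‖ ≤ C) → MemLp (B.indicator f) ∞ μ := by
    intro B hB f C hf hC
    refine memLp_top_of_bound ((hf.indicator hB).aestronglyMeasurable) (max C 0) ?_
    refine Eventually.of_forall fun x => ?_
    by_cases hx : x ∈ B
    · rw [Set.indicator_of_mem hx]
      exact le_max_of_le_left (hC x hx)
    · rw [Set.indicator_of_notMem hx]
      simp
  -- Step A : W n vanishes off s n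
  have hA : ∀ n, W n =ᵐ[μ] fun x => (s n).indicator (fun _ => (1 : ℂ)) x * W n x := by
    intro n
    refine hmod _ (hmemtop (s n) (hs n) (fun _ => 1) 1 stronglyMeasurable_const
      (fun x _ => by simp)) (χ n) (χ n) ?_
    filter_upwards [hχcoe n] with x hx
    rw [hx]
    by_cases h : x ∈ s n <;>
      simp [Set.indicator_of_mem, Set.indicator_of_notMem, h]
  -- Step B : W n is idempotent-valued on s n
  have hB : ∀ n k : ℕ, ∀ᵐ x ∂μ, x ∈ s n → ‖W n x‖ ≤ (k : ℝ) →
      W n x * W n x = W n x := by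
    intro n k
    set B : Set X := s n ∩ {x | ‖W n x‖ ≤ (k : ℝ)} with hBdef
    have hBmeas : MeasurableSet B :=
      (hs n).inter (measurableSet_le (hWmeas n).measurable.norm measurable_const)
    have hμB : μ B ≠ ∞ :=
      ((measure_mono Set.inter_subset_left).trans_lt (measure_spanningSets_lt_top μ n)).ne
    set χB : Lp ℂ p μ := indicatorConstLp p hBmeas hμB (1 : ℂ) with hχBdef
    have hχBcoe : (χB : X → ℂ) =ᵐ[μ] B.indicator fun _ => (1 : ℂ) := indicatorConstLp_coeFn
    have h1 : (T χB : X → ℂ) =ᵐ[μ] fun x => B.indicator (fun _ => (1 : ℂ)) x * W n x := by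
      refine hmod _ (hmemtop B hBmeas (fun _ => 1) 1 stronglyMeasurable_const
        (fun x _ => by simp)) (χ n) χB ?_
      filter_upwards [hχBcoe, hχcoe n] with x hx hx'
      rw [hx, hx']
      by_cases h : x ∈ B
      · have hxs : x ∈ s n := h.1
        simp [Set.indicator_of_mem, h, hxs]
      · simp [Set.indicator_of_notMem h]
    have h2 : (T (T χB) : X → ℂ) =ᵐ[μ] fun x => B.indicator (W n) x * W n x := by
      refine hmod _ (hmemtop B hBmeas (W n) k (hWmeas n) (fun x hx => hx.2)) (χ n) (T χB) ?_
      filter_upwards [h1, hχcoe n] with x hx hx'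
      rw [hx, hx']
      by_cases h : x ∈ B
      · have hxs : x ∈ s n := h.1
        simp [Set.indicator_of_mem, h, hxs]
      · simp [Set.indicator_of_notMem h]
    rw [hidem χB] at h2
    filter_upwards [h1, h2] with x hx1 hx2 hxs hxk
    have hxB : x ∈ B := ⟨hxs, hxk⟩
    rw [hx1, Set.indicator_of_mem hxB, Set.indicator_of_mem hxB, one_mul] at hx2
    exact hx2.symm
  -- Step C : consistency
  have hC : ∀ m n, m ≤ n →
      W m =ᵐ[μ] fun x => (s m).indicator (fun _ => (1 : ℂ)) x * W n x := by
    intro m n hmn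
    refine hmod _ (hmemtop (s m) (hs m) (fun _ => 1) 1 stronglyMeasurable_const
      (fun x _ => by simp)) (χ n) (χ m) ?_
    filter_upwards [hχcoe m, hχcoe n] with x hx hx'
    rw [hx, hx']
    by_cases h : x ∈ s m
    · have hxn : x ∈ s n := monotone_spanningSets μ hmn h
      simp [Set.indicator_of_mem, h, hxn]
    · simp [Set.indicator_of_notMem h]
  -- combine countably many a.e. statements
  have hkey : ∀ᵐ x ∂μ,
      (∀ n, W n x = (s n).indicator (fun _ => (1 : ℂ)) x * W n x) ∧
      (∀ n k : ℕ, x ∈ s n → ‖W n x‖ ≤ (k : ℝ) → W n x * W n x = W n x) ∧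
      (∀ m n, m ≤ n → W m x = (s m).indicator (fun _ => (1 : ℂ)) x * W n x) := by
    have k3 : ∀ᵐ x ∂μ, ∀ m n, m ≤ n →
        W m x = (s m).indicator (fun _ => (1 : ℂ)) x * W n x := by
      refine ae_all_iff.2 fun m => ae_all_iff.2 fun n => ?_
      by_cases hmn : m ≤ n
      · filter_upwards [hC m n hmn] with x hx _
        exact hx
      · exact Eventually.of_forall fun x h => absurd h hmn
    filter_upwards [ae_all_iff.2 hA, ae_all_iff.2 fun n => ae_all_iff.2 (hB n), k3]
      with x h1 h2 h3
    exact ⟨h1, h2, h3⟩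
  -- the set E
  set E : Set X := ⋃ n, s n ∩ {x | W n x = 1} with hE_def
  have hEmeas : MeasurableSet E :=
    MeasurableSet.iUnion fun n =>
      (hs n).inter ((hWmeas n).measurable (measurableSet_singleton (1 : ℂ)))
  -- Step E : W n agrees a.e. with 1_{s n} * 1_E
  have hWE : ∀ n, W n =ᵐ[μ]
      fun x => (s n).indicator (fun _ => (1 : ℂ)) x * E.indicator (fun _ => (1 : ℂ)) x := by
    intro n
    filter_upwards [hkey] with x hx
    obtain ⟨h0, hsq, hcons⟩ := hx
    by_cases hxn : x ∈ s n
    · have h01 : W n x = 0 ∨ W n x = 1 := by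
        have hk := hsq n ⌈‖W n x‖⌉₊ hxn (Nat.le_ceil _)
        have : W n x * (W n x - 1) = 0 := by
          rw [mul_sub, mul_one, hk, sub_self]
        rcases mul_eq_zero.1 this with h | h
        · exact Or.inl h
        · exact Or.inr (by linear_combination h)
      rcases h01 with h | h
      · have hxE : x ∉ E := by
          intro hxE
          rcases Set.mem_iUnion.1 hxE with ⟨m, hxm⟩
          rcases le_total m n with hmn | hnm
          · have h' := hcons m n hmn
            rw [Set.indicator_of_mem hxm.1, one_mul, h] at h'
            exact one_ne_zero (hxm.2.symm.trans h')
          · have h' := hcons n m hnm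
            rw [Set.indicator_of_mem hxn, one_mul, hxm.2] at h'
            exact one_ne_zero (h'.symm.trans h)
        rw [h, Set.indicator_of_notMem hxE, mul_zero]
      · have hxE : x ∈ E := Set.mem_iUnion.2 ⟨n, hxn, h⟩
        rw [h, Set.indicator_of_mem hxn, Set.indicator_of_mem hxE, one_mul]
    · rw [Set.indicator_of_notMem hxn, zero_mul]
      have h' := h0 n
      rwa [Set.indicator_of_notMem hxn, zero_mul] at h'
  -- Step F : for bounded g, T g = 1_E g a.e.
  have hFb : ∀ g : Lp ℂ p μ, MemLp (g : X → ℂ) ∞ μ →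
      (T g : X → ℂ) =ᵐ[μ] E.indicator (g : X → ℂ) := by
    intro g hg
    have hstep : ∀ n, ∀ᵐ x ∂μ,
        (s n).indicator (fun _ => (1 : ℂ)) x * (T g : X → ℂ) x = (g : X → ℂ) x * W n x := by
      intro n
      have hu : MemLp ((s n).indicator (g : X → ℂ)) p μ := (Lp.memLp g).indicator (hs n)
      set u : Lp ℂ p μ := hu.toLp _ with hu_def
      have hucoe : (u : X → ℂ) =ᵐ[μ] (s n).indicator (g : X → ℂ) := hu.coeFn_toLp
      have h1 : (T u : X → ℂ) =ᵐ[μ]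
          fun x => (s n).indicator (fun _ => (1 : ℂ)) x * (T g : X → ℂ) x := by
        refine hmod _ (hmemtop (s n) (hs n) (fun _ => 1) 1 stronglyMeasurable_const
          (fun x _ => by simp)) g u ?_
        filter_upwards [hucoe] with x hx
        rw [hx]
        by_cases h : x ∈ s n <;>
          simp [Set.indicator_of_mem, Set.indicator_of_notMem, h]
      have h2 : (T u : X → ℂ) =ᵐ[μ] fun x => (g : X → ℂ) x * W n x := by
        refine hmod _ hg (χ n) u ?_
        filter_upwards [hucoe, hχcoe n] with x hx hx'
        rw [hx, hx']
        by_cases h : x ∈ s n <;>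
          simp [Set.indicator_of_mem, Set.indicator_of_notMem, h]
      filter_upwards [h1, h2] with x hx1 hx2
      rw [← hx1, hx2]
    filter_upwards [ae_all_iff.2 hstep, ae_all_iff.2 hWE] with x hx hWx
    obtain ⟨n, hn⟩ : ∃ n, x ∈ s n := by
      have hx' : x ∈ ⋃ n, s n := by rw [hs_def, iUnion_spanningSets]; trivial
      exact Set.mem_iUnion.1 hx'
    have h1 := hx n
    have h2 := hWx n
    rw [Set.indicator_of_mem hn, one_mul] at h1 h2
    rw [h1, h2]
    by_cases h : x ∈ E <;>
      simp [Set.indicator_of_mem, Set.indicator_of_notMem, h]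
  -- Step G : density argument
  set M : Lp ℂ p μ → Lp ℂ p μ :=
    fun g => ((Lp.memLp g).indicator hEmeas).toLp (E.indicator (g : X → ℂ)) with hM_def
  have hMcoe : ∀ g, (M g : X → ℂ) =ᵐ[μ] E.indicator (g : X → ℂ) :=
    fun g => MemLp.coeFn_toLp _
  have hMlip : LipschitzWith 1 M := by
    refine LipschitzWith.of_dist_le_mul fun g g' => ?_
    rw [NNReal.coe_one, one_mul, dist_eq_norm, dist_eq_norm, Lp.norm_def, Lp.norm_def]
    have hcongr : ((M g - M g' : Lp ℂ p μ) : X → ℂ) =ᵐ[μ]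
        E.indicator ((g : X → ℂ) - (g' : X → ℂ)) := by
      filter_upwards [Lp.coeFn_sub (M g) (M g'), hMcoe g, hMcoe g'] with x h1 h2 h3
      rw [h1, Pi.sub_apply, h2, h3]
      by_cases h : x ∈ E <;>
        simp [Set.indicator_of_mem, Set.indicator_of_notMem, h]
    rw [eLpNorm_congr_ae hcongr]
    refine ENNReal.toReal_mono (Lp.memLp _).eLpNorm_lt_top.ne ?_
    refine le_trans (eLpNorm_indicator_le _) (le_of_eq (eLpNorm_congr_ae ?_))
    exact (Lp.coeFn_sub g g').symm
  have hclosed : IsClosed {g : Lp ℂ p μ | T g = M g} :=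
    isClosed_eq T.continuous hMlip.continuous
  have hrange : Set.range ((↑) : Lp.simpleFunc ℂ p μ → Lp ℂ p μ) ⊆ {g | T g = M g} := by
    rintro _ ⟨φ, rfl⟩
    have hbdd : MemLp (((φ : Lp ℂ p μ)) : X → ℂ) ∞ μ := by
      obtain ⟨C, hC⟩ := (Lp.simpleFunc.toSimpleFunc φ).exists_forall_norm_le
      refine memLp_top_of_bound (Lp.aestronglyMeasurable _) C ?_
      filter_upwards [Lp.simpleFunc.toSimpleFunc_eq_toFun φ] with x hx
      rw [← hx]
      exact hC x
    exact Lp.ext ((hFb _ hbdd).trans (hMcoe _).symm)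
  have hall : ∀ g, T g = M g := fun g =>
    (closure_minimal hrange hclosed) ((Lp.simpleFunc.denseRange hp') g)
  have hTE : ∀ g : Lp ℂ p μ, (T g : X → ℂ) =ᵐ[μ] E.indicator (g : X → ℂ) := by
    intro g
    rw [hall g]
    exact hMcoe g
  -- Step H : norm identity
  have hnorm : ∀ f : Lp ℂ p μ,
      ‖f‖ ^ q = (∫⁻ x, (‖(f : X → ℂ) x‖₊ : ℝ≥0∞) ^ q ∂μ).toReal := by
    intro f
    rw [Lp.norm_def, eLpNorm_eq_lintegral_rpow_enorm_toReal hp0 hp', ENNReal.toReal_rpow,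
      ← ENNReal.rpow_mul, one_div, inv_mul_cancel₀ hq_pos.ne', ENNReal.rpow_one]
    rfl
  have hfin : ∀ f : Lp ℂ p μ, ∫⁻ x, (‖(f : X → ℂ) x‖₊ : ℝ≥0∞) ^ q ∂μ ≠ ∞ := by
    intro f
    have h := (Lp.memLp f).eLpNorm_lt_top
    rw [eLpNorm_eq_lintegral_rpow_enorm_toReal hp0 hp',
      ENNReal.rpow_lt_top_iff_of_pos (by positivity)] at h
    exact h.ne
  refine ⟨E, hEmeas, hTE, fun g => ?_⟩
  have hsub : ((g - T g : Lp ℂ p μ) : X → ℂ) =ᵐ[μ] Eᶜ.indicator (g : X → ℂ) := by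
    filter_upwards [Lp.coeFn_sub g (T g), hTE g] with x h1 h2
    rw [h1, Pi.sub_apply, h2]
    by_cases h : x ∈ E <;>
      simp [Set.indicator_of_mem, Set.indicator_of_notMem, h]
  set F : X → ℝ≥0∞ := fun x => (‖(g : X → ℂ) x‖₊ : ℝ≥0∞) ^ q with hF_def
  have hFmeas : Measurable F := (Lp.stronglyMeasurable g).measurable.enorm.pow_const q
  have eq1 : (∫⁻ x, (‖(T g : X → ℂ) x‖₊ : ℝ≥0∞) ^ q ∂μ) = ∫⁻ x, E.indicator F x ∂μ := by
    refine lintegral_congr_ae ?_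
    filter_upwards [hTE g] with x hx
    rw [hx]
    by_cases h : x ∈ E <;>
      simp [hF_def, Set.indicator_of_mem, Set.indicator_of_notMem, h,
        ENNReal.zero_rpow_of_pos hq_pos]
  have eq2 : (∫⁻ x, (‖((g - T g : Lp ℂ p μ) : X → ℂ) x‖₊ : ℝ≥0∞) ^ q ∂μ)
      = ∫⁻ x, Eᶜ.indicator F x ∂μ := by
    refine lintegral_congr_ae ?_
    filter_upwards [hsub] with x hx
    rw [hx]
    by_cases h : x ∈ E <;>
      simp [hF_def, Set.indicator_of_mem, Set.indicator_of_notMem, h,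
        ENNReal.zero_rpow_of_pos hq_pos]
  have hle : ∀ (A : Set X), ∫⁻ x, A.indicator F x ∂μ ≠ ∞ := by
    intro A
    refine ne_top_of_le_ne_top (hfin g) (lintegral_mono fun x => ?_)
    exact Set.indicator_le_self A F x
  have eq3 : (∫⁻ x, E.indicator F x ∂μ) + ∫⁻ x, Eᶜ.indicator F x ∂μ = ∫⁻ x, F x ∂μ := by
    rw [← lintegral_add_left (hFmeas.indicator hEmeas)]
    refine lintegral_congr fun x => ?_
    by_cases h : x ∈ E <;>
      simp [Set.indicator_of_mem, Set.indicator_of_notMem, h]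
  rw [hnorm g, hnorm (T g), hnorm (g - T g), eq1, eq2,
    ← ENNReal.toReal_add (hle E) (hle Eᶜ), eq3]
end

section
/- Let A and B be unital C*-algebras and let π : A → B be a unital algebra homomorphism (linear, multiplicative, π(1) = 1) which is isometric: ‖π(x)‖ = ‖x‖ for all x ∈ A. Then π is *-preserving: π(x*) = π(x)* for all x ∈ A. -/
open NormedSpace Complex

/-- In a unital C*-algebra, an invertible element whose norm and the norm of whose
inverse are both at most `1` satisfies `star v = v⁻¹` (it is a unitary). -/
lemma star_eq_inv_of_norm_le {B : Type*} [CStarAlgebra B] (v : Bˣ)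
    (h1 : ‖(v : B)‖ ≤ 1) (h2 : ‖((v⁻¹ : Bˣ) : B)‖ ≤ 1) :
    star (v : B) = ((v⁻¹ : Bˣ) : B) := by
  letI := CStarAlgebra.spectralOrder B
  haveI := CStarAlgebra.spectralOrderedRing B
  set w : Bˣ := star v * v with hw
  have hwv : (w : B) = star (v : B) * v := by
    rw [hw, Units.val_mul, Units.coe_star]
  have hwinv : ((w⁻¹ : Bˣ) : B) = ((v⁻¹ : Bˣ) : B) * star ((v⁻¹ : Bˣ) : B) := by
    rw [hw, mul_inv_rev, Units.val_mul, Units.coe_star_inv]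
  have hw0 : (0 : B) ≤ (w : B) := hwv ▸ star_mul_self_nonneg _
  have hwi0 : (0 : B) ≤ ((w⁻¹ : Bˣ) : B) := hwinv ▸ mul_star_self_nonneg _
  have hn1 : ‖(w : B)‖ ≤ 1 := by
    rw [hwv, CStarRing.norm_star_mul_self]
    exact mul_le_one₀ h1 (norm_nonneg _) h1
  have hn2 : ‖((w⁻¹ : Bˣ) : B)‖ ≤ 1 := by
    rw [hwinv, CStarRing.norm_self_mul_star]
    exact mul_le_one₀ h2 (norm_nonneg _) h2
  have hle : (w : B) ≤ 1 := (CStarAlgebra.norm_le_one_iff_of_nonneg _ hw0).mp hn1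
  have hgei : ((w⁻¹ : Bˣ) : B) ≤ 1 := (CStarAlgebra.norm_le_one_iff_of_nonneg _ hwi0).mp hn2
  have hge : (1 : B) ≤ (w : B) := by
    have h := (CStarAlgebra.inv_le_one_iff_one_le (a := w) hw0).mp hgei
    exact_mod_cast Units.val_le_val.mpr h
  have hwone : (w : B) = 1 := le_antisymm hle hge
  calc star (v : B) = star (v : B) * ((v : B) * ((v⁻¹ : Bˣ) : B)) := by
        rw [← Units.val_mul, mul_inv_cancel, Units.val_one, mul_one]
      _ = (star (v : B) * (v : B)) * ((v⁻¹ : Bˣ) : B) := by rw [mul_assoc]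
      _ = ((v⁻¹ : Bˣ) : B) := by rw [← hwv, hwone, one_mul]

/-- An isometric unital algebra homomorphism between unital C*-algebras is
automatically *-preserving. -/
theorem stmt19 {A B : Type*} [CStarAlgebra A] [CStarAlgebra B]
    (π : A →ₐ[ℂ] B) (hiso : ∀ x : A, ‖π x‖ = ‖x‖) :
    ∀ x : A, π (star x) = star (π x) := by
  intro x
  letI : NormedAlgebra ℚ A := .restrictScalars ℚ ℂ A
  letI : NormedAlgebra ℚ B := .restrictScalars ℚ ℂ B
  nontriviality B
  haveI : Nontrivial A := by
    refine ⟨1, 0, fun h => ?_⟩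
    have : (1 : B) = 0 := by
      calc (1 : B) = π 1 := (map_one π).symm
        _ = π 0 := by rw [h]
        _ = 0 := map_zero π
    exact one_ne_zero this
  have hcont : Continuous π := (AddMonoidHomClass.isometry_of_norm π hiso).continuous
  -- Step 1: π maps selfadjoint elements to selfadjoint elements.
  have key : ∀ a : A, star a = a → star (π a) = π a := by
    intro a ha
    set b : B := π a with hb
    -- for every real t, exp (-(t*I) • star b) = exp (-(t*I) • b)
    have claim : ∀ t : ℝ, exp ((-((t : ℂ) * I)) • star b) = exp ((-((t : ℂ) * I)) • b) := by
      intro t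
      set z : A := ((t : ℂ) * I) • a with hz
      have hzskew : star z = -z := by
        rw [hz, star_smul, ha]
        simp [Complex.star_def, map_mul, Complex.conj_ofReal, Complex.conj_I, neg_smul,
          mul_neg]
      have hu : exp z ∈ unitary A :=
        exp_mem_unitary_of_mem_skewAdjoint (skewAdjoint.mem_iff.mpr hzskew)
      have hval : π (exp z) * π (star (exp z)) = 1 := by
        rw [← map_mul, (Unitary.mem_iff.mp hu).2, map_one]
      have hinvval : π (star (exp z)) * π (exp z) = 1 := by
        rw [← map_mul, (Unitary.mem_iff.mp hu).1, map_one]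
      set v : Bˣ := ⟨π (exp z), π (star (exp z)), hval, hinvval⟩ with hv
      have hv1 : ‖(v : B)‖ ≤ 1 := le_of_eq <| by
        show ‖π (exp z)‖ = 1
        rw [hiso]
        exact CStarRing.norm_of_mem_unitary hu
      have hv2 : ‖((v⁻¹ : Bˣ) : B)‖ ≤ 1 := le_of_eq <| by
        show ‖π (star (exp z))‖ = 1
        rw [hiso]
        exact CStarRing.norm_of_mem_unitary (Unitary.star_mem hu)
      have hstar : star (π (exp z)) = π (star (exp z)) :=
        star_eq_inv_of_norm_le v hv1 hv2
      -- rewrite both sides as exponentials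
      have hLHS : star (π (exp z)) = exp ((-((t : ℂ) * I)) • star b) := by
        rw [map_exp π hcont, star_exp, hz, map_smul, ← hb, star_smul]
        congr 1
        simp [Complex.star_def, map_mul, Complex.conj_ofReal, Complex.conj_I, neg_smul,
          mul_neg]
      have hRHS : π (star (exp z)) = exp ((-((t : ℂ) * I)) • b) := by
        rw [star_exp, hzskew, map_exp π hcont, map_neg, hz, map_smul, ← hb, neg_smul]
      rw [← hLHS, ← hRHS, hstar]
    -- convert to an equality of real-exponential functions and differentiate at 0
    have claim' : (fun t : ℝ => exp (t • (I • star b))) =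
        fun t : ℝ => exp (t • (I • b)) := by
      funext t
      rw [← Complex.coe_smul, ← Complex.coe_smul, smul_smul, smul_smul]
      have := claim (-t)
      simpa [neg_mul, push_cast] using this
    have h1 : HasDerivAt (fun t : ℝ => exp (t • (I • star b))) (I • star b) 0 := by
      simpa using hasDerivAt_exp_smul_const (𝕂 := ℝ) (I • star b) 0
    have h2 : HasDerivAt (fun t : ℝ => exp (t • (I • star b))) (I • b) 0 := by
      rw [claim']
      simpa using hasDerivAt_exp_smul_const (𝕂 := ℝ) (I • b) 0
    have hIeq : I • star b = I • b := h1.unique h2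
    have := congrArg (fun y => (-I) • y) hIeq
    simpa [smul_smul, neg_mul, Complex.I_mul_I] using this
  -- Step 2: decompose a general element.
  set P : B := π x with hP
  set Q : B := π (star x) with hQ
  have h₁ : star (π (x + star x)) = π (x + star x) := key _ (by simp [star_add, add_comm])
  have h₂ : star (π (I • (x - star x))) = π (I • (x - star x)) := key _ (by
    rw [star_smul, star_sub, star_star, Complex.star_def, Complex.conj_I, neg_smul, smul_sub]
    rw [smul_sub]
    abel)
  have E1 : star P + star Q = P + Q := by
    have := h₁
    rw [map_add, star_add, ← hP, ← hQ] at this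
    exact this
  have E2 : star Q - star P = P - Q := by
    have := h₂
    rw [map_smul, map_sub, star_smul, Complex.star_def, Complex.conj_I, star_sub,
      ← hP, ← hQ, neg_smul] at this
    -- this : -(I • (star P - star Q)) = I • (P - Q)
    have h3 := congrArg (fun y => (-I) • y) this
    simpa [smul_smul, neg_mul, Complex.I_mul_I, smul_neg, neg_sub] using h3
  have htwo : star P + star P = Q + Q := by
    calc star P + star P = (star P + star Q) - (star Q - star P) := by abel
      _ = (P + Q) - (P - Q) := by rw [E1, E2]
      _ = Q + Q := by abel
  have h2smul : (2 : ℂ) • star P = (2 : ℂ) • Q := by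
    rw [two_smul, two_smul]; exact htwo
  have : star P = Q := by
    have := congrArg (fun y => ((2 : ℂ)⁻¹) • y) h2smul
    simpa [smul_smul] using this
  rw [← hP, ← hQ] at *
  exact this.symm
end
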